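/- arXiv:2008.06531 — 9 statements merged into one kernel-verified Lean document; each statement's English description precedes it below -/
import Mathlib

section
/- Let A be a simplicial complex on a nonempty finite set X with n elements, i.e., a collection of subsets of X containing ∅ that is closed under taking subsets. Then for every natural number k with k ≤ n/2, the number of members of A of cardinality k is at least the number of members of A of cardinality n − k. -/
/-!
Double count the pairs `S ⊆ T` with `S` a `k`-set and `T` an `(n - k)`-set of the complex.
Every `T` contains `(n - k).choose k` such `S`, all in the complex since it is closed under
subsets, while every `S` lies in at most `(n - k).choose (n - 2k)` such `T`; the two binomial
coefficients agree.
-/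

open Finset

namespace Finset

variable {α : Type*} [Fintype α]

theorem card_filter_superset_le_of_sized [DecidableEq α] {𝒜 : Finset (Finset α)} {l : ℕ}
    (h𝒜 : (𝒜 : Set (Finset α)).Sized l) (S : Finset α) :
    #{T ∈ 𝒜 | S ⊆ T} ≤ (Fintype.card α - #S).choose (l - #S) := by
  have h_image : {T ∈ 𝒜 | S ⊆ T} ⊆ (Sᶜ.powersetCard (l - #S)).image (S ∪ ·) := by
    intro T hT
    obtain ⟨hT𝒜, hST⟩ := mem_filter.1 hT
    refine mem_image.2 ⟨T \ S, mem_powersetCard.2 ⟨?_, ?_⟩, union_sdiff_of_subset hST⟩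
    · exact fun x hx => mem_compl.2 (mem_sdiff.1 hx).2
    · rw [card_sdiff_of_subset hST, h𝒜 hT𝒜]
  calc #{T ∈ 𝒜 | S ⊆ T}
      ≤ #((Sᶜ.powersetCard (l - #S)).image (S ∪ ·)) := card_le_card h_image
    _ ≤ #(Sᶜ.powersetCard (l - #S)) := card_image_le
    _ = (Fintype.card α - #S).choose (l - #S) := by rw [card_powersetCard, card_compl]

theorem card_slice_mul_choose_le {𝒜 : Finset (Finset α)} (h𝒜 : IsLowerSet (𝒜 : Set (Finset α)))
    (k l : ℕ) :
    #(𝒜 # l) * l.choose k ≤ #(𝒜 # k) * (Fintype.card α - k).choose (l - k) := by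
  classical
  refine card_mul_le_card_mul (fun T S => S ⊆ T) (fun T hT => ?_) (fun S hS => ?_)
  · obtain ⟨hT𝒜, hTl⟩ := mem_slice.1 hT
    have h_sub : T.powersetCard k ⊆ (𝒜 # k).bipartiteAbove (fun T S => S ⊆ T) T := by
      intro S hS
      obtain ⟨hST, hSk⟩ := mem_powersetCard.1 hS
      exact (mem_bipartiteAbove _).2 ⟨mem_slice.2 ⟨h𝒜 hST hT𝒜, hSk⟩, hST⟩
    simpa [hTl] using card_le_card h_sub
  · rw [← (mem_slice.1 hS).2]
    exact card_filter_superset_le_of_sized sized_slice S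

end Finset

theorem simplicialComplex_card_layer_le_general {X : Type*} [Fintype X]
    (A : Finset (Finset X))
    (hdown : ∀ B ∈ A, ∀ C ⊆ B, C ∈ A)
    (k : ℕ) (hk : (k : ℝ) ≤ (Fintype.card X : ℝ) / 2) :
    (A.filter fun B => B.card = Fintype.card X - k).card ≤
      (A.filter fun B => B.card = k).card := by
  set n := Fintype.card X
  have h2k : 2 * k ≤ n := by
    have : (2 * k : ℝ) ≤ n := by linarith
    exact_mod_cast this
  have h_lower : IsLowerSet (A : Set (Finset X)) := fun B C hCB hB => hdown B hB C hCB
  have h_count := card_slice_mul_choose_le h_lower k (n - k)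
  rw [Nat.choose_symm_of_eq_add (show n - k = k + (n - k - k) by omega)] at h_count
  exact Nat.le_of_mul_le_mul_right h_count (Nat.choose_pos (by omega))

/-- For a simplicial complex `A` on a nonempty finite set `X` with `n` elements
(`∅ ∈ A` and `A` is closed under taking subsets), for every `k ≤ n/2` the number
of members of `A` of cardinality `n - k` is at most the number of members of
cardinality `k`. -/
theorem simplicialComplex_card_layer_le {X : Type*} [Fintype X] [DecidableEq X]
    [Nonempty X] (A : Finset (Finset X))
    (hempty : ∅ ∈ A) (hdown : ∀ B ∈ A, ∀ C ⊆ B, C ∈ A)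
    (k : ℕ) (hk : (k : ℝ) ≤ (Fintype.card X : ℝ) / 2) :
    (A.filter fun B => B.card = Fintype.card X - k).card ≤
      (A.filter fun B => B.card = k).card :=
  simplicialComplex_card_layer_le_general A hdown k hk
end

section
/- Let A be a simplicial complex on a nonempty finite set X with n elements. Then the average cardinality of a member of A satisfies av(A) = (Σ_{B ∈ A} |B|)/|A| ≤ n/2. -/
/-!
Deleting a point `a` maps the faces of a simplicial complex that contain `a` injectively into
the faces that miss `a`, so every point lies in at most half of the faces. Counting the pairs
(point, face containing it) then bounds the total size of the faces by `n * |A| / 2`.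
-/

open Finset

section

variable {α : Type*} {𝒜 : Finset (Finset α)}

theorem Finset.sum_card_eq_sum_card_filter_mem [Fintype α] [DecidableEq α]
    (𝒜 : Finset (Finset α)) : ∑ s ∈ 𝒜, #s = ∑ a, #{s ∈ 𝒜 | a ∈ s} := by
  simp_rw [card_eq_sum_ones, sum_filter]
  rw [sum_comm]
  exact sum_congr rfl fun s _ => by rw [sum_ite_mem, univ_inter]

theorem IsLowerSet.two_mul_card_filter_mem_le [DecidableEq α]
    (h : IsLowerSet (𝒜 : Set (Finset α))) (a : α) : 2 * #{s ∈ 𝒜 | a ∈ s} ≤ #𝒜 := by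
  have hmem : #{s ∈ 𝒜 | a ∈ s} = #(𝒜.memberSubfamily a) :=
    (card_image_of_injOn ((erase_injOn' a).mono fun s hs => (mem_filter.1 hs).2)).symm
  have hsub := card_le_card (h.memberSubfamily_subset_nonMemberSubfamily (a := a))
  have hsum := card_memberSubfamily_add_card_nonMemberSubfamily a 𝒜
  omega

theorem IsLowerSet.two_mul_sum_card_le [Fintype α] (h : IsLowerSet (𝒜 : Set (Finset α))) :
    2 * ∑ s ∈ 𝒜, #s ≤ Fintype.card α * #𝒜 := by
  classical
  calc 2 * ∑ s ∈ 𝒜, #s = ∑ a, 2 * #{s ∈ 𝒜 | a ∈ s} := by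
        rw [sum_card_eq_sum_card_filter_mem, mul_sum]
    _ ≤ ∑ _a : α, #𝒜 := sum_le_sum fun a _ => h.two_mul_card_filter_mem_le a
    _ = Fintype.card α * #𝒜 := by rw [sum_const, card_univ, smul_eq_mul]

end

theorem simplicialComplex_average_le_half_general {X : Type*} [Fintype X] (A : Finset (Finset X))
    (hdown : ∀ B ∈ A, ∀ C ⊆ B, C ∈ A) :
    (∑ B ∈ A, (B.card : ℝ)) / (A.card : ℝ) ≤ (Fintype.card X : ℝ) / 2 := by
  have hlower : IsLowerSet (A : Set (Finset X)) := fun B C hCB hB => hdown B hB C hCB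
  have key : (2 * ∑ B ∈ A, B.card : ℝ) ≤ Fintype.card X * A.card := by
    exact_mod_cast hlower.two_mul_sum_card_le
  push_cast at key
  refine div_le_of_le_mul₀ (by positivity) (by positivity) ?_
  linarith

/-- For a simplicial complex `A` on a nonempty finite set `X` with `n` elements
(`∅ ∈ A` and `A` is closed under taking subsets), the average cardinality of a
member of `A` is at most `n / 2`. -/
theorem simplicialComplex_average_le_half {X : Type*} [Fintype X] [DecidableEq X]
    [Nonempty X] (A : Finset (Finset X))
    (hempty : ∅ ∈ A) (hdown : ∀ B ∈ A, ∀ C ⊆ B, C ∈ A) :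
    (∑ B ∈ A, (B.card : ℝ)) / (A.card : ℝ) ≤ (Fintype.card X : ℝ) / 2 :=
  simplicialComplex_average_le_half_general A hdown
end

section
/- Let G be a finite simple graph on n ≥ 1 vertices. Then avd(G) ≥ n·2^{n−1}/(2^n − 1), with equality if and only if G is isomorphic to the complete graph K_n. -/
/-!
The dominating sets of `G` form an up-set `𝒜` of `Finset V` that does not contain `∅`, and it
is the family of all nonempty sets exactly when `G` is complete. For an up-set, the local LYM
inequality makes the proportion `d k` of the `k`-sets lying in `𝒜` nondecreasing in `k`. Over
the nonempty sets `S`, the functions `S ↦ d #S` and `S ↦ #S` are therefore similarly ordered,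
and `∑ d #S = #𝒜`, `∑ d #S * #S = ∑ S ∈ 𝒜, #S`; so Chebyshev's sum inequality says that the
average size of a set of `𝒜` is at least the average size `n 2^(n-1) / (2^n - 1)` of a nonempty
set. If `𝒜` misses a nonempty set `S`, then `d #S < 1 = d n` and the inequality is strict.
-/

open Finset

/-- `S` is a dominating set of `G`: every vertex is in `S` or adjacent to a vertex of `S`. -/
def SimpleGraph.IsDomSet {V : Type*} (G : SimpleGraph V) (S : Finset V) : Prop :=
  ∀ v : V, v ∈ S ∨ ∃ u ∈ S, G.Adj u v

/-- The family of all dominating sets of `G`. -/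
noncomputable def SimpleGraph.domSets {V : Type*} [Fintype V] (G : SimpleGraph V) :
    Finset (Finset V) :=
  @Finset.filter _ (fun S => G.IsDomSet S) (Classical.decPred _) Finset.univ

/-- The average order (cardinality) of a dominating set of `G`. -/
noncomputable def SimpleGraph.avd {V : Type*} [Fintype V] (G : SimpleGraph V) : ℝ :=
  (∑ S ∈ G.domSets, (S.card : ℝ)) / (G.domSets).card

open scoped FinsetFamily

theorem Finset.sum_sum_sub_mul_sub {ι : Type*} (s : Finset ι) (f g : ι → ℝ) :
    ∑ i ∈ s, ∑ j ∈ s, (f i - f j) * (g i - g j) =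
      2 * (#s * ∑ i ∈ s, f i * g i - (∑ i ∈ s, f i) * ∑ i ∈ s, g i) := by
  simp only [sub_mul, mul_sub, sum_sub_distrib, sum_const, nsmul_eq_mul, ← mul_sum, ← sum_mul]
  rw [sum_mul_sum]
  ring

theorem MonovaryOn.sum_mul_sum_lt_card_mul_sum {ι : Type*} {s : Finset ι} {f g : ι → ℝ}
    (hfg : MonovaryOn f g s) {i j : ι} (hi : i ∈ s) (hj : j ∈ s) (hf : f i < f j)
    (hg : g i < g j) :
    (∑ i ∈ s, f i) * ∑ i ∈ s, g i < #s * ∑ i ∈ s, f i * g i := by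
  have hterm : ∀ k ∈ s, ∀ l ∈ s, 0 ≤ (f k - f l) * (g k - g l) := by
    intro k hk l hl
    rcases lt_trichotomy (g k) (g l) with h | h | h
    · exact mul_nonneg_of_nonpos_of_nonpos (sub_nonpos.2 (hfg hk hl h)) (sub_neg.2 h).le
    · simp [h]
    · exact mul_nonneg (sub_nonneg.2 (hfg hl hk h)) (sub_pos.2 h).le
  have hpos : 0 < ∑ k ∈ s, ∑ l ∈ s, (f k - f l) * (g k - g l) :=
    sum_pos' (fun k hk => sum_nonneg (hterm k hk))
      ⟨j, hj, sum_pos' (hterm j hj) ⟨i, hi, mul_pos (sub_pos.2 hf) (sub_pos.2 hg)⟩⟩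
  rw [sum_sum_sub_mul_sub] at hpos
  linarith

namespace Finset

section SliceDensity

variable {α : Type*} [Fintype α] {𝒜 : Finset (Finset α)}

noncomputable def sliceDensity (𝒜 : Finset (Finset α)) (k : ℕ) : ℝ :=
  #(𝒜 # k) / (Fintype.card α).choose k

theorem sliceDensity_card_lt_one {S : Finset α} (hS : S ∉ 𝒜) : sliceDensity 𝒜 #S < 1 := by
  have hlt : 𝒜 # #S ⊂ powersetCard #S univ :=
    ssubset_iff_subset_ne.2 ⟨sized_slice.subset_powersetCard_univ, fun h => hS <|
      slice_subset (h ▸ mem_powersetCard_univ.2 rfl : S ∈ 𝒜 # #S)⟩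
  have hcard := card_lt_card hlt
  rw [card_powersetCard, card_univ] at hcard
  rw [sliceDensity, div_lt_one (by exact_mod_cast (Nat.zero_le _).trans_lt hcard)]
  exact_mod_cast hcard

theorem sliceDensity_card_eq_one {S : Finset α} (h : ∀ T : Finset α, #T = #S → T ∈ 𝒜) :
    sliceDensity 𝒜 #S = 1 := by
  have heq : 𝒜 # #S = powersetCard #S univ :=
    sized_slice.subset_powersetCard_univ.antisymm fun T hT =>
      mem_slice.2 ⟨h T (mem_powersetCard_univ.1 hT), mem_powersetCard_univ.1 hT⟩
  have hpos : 0 < (Fintype.card α).choose #S := Nat.choose_pos S.card_le_univ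
  rw [sliceDensity, heq, card_powersetCard, card_univ, div_self (by positivity)]

theorem sum_sliceDensity_card_mul (𝒜 : Finset (Finset α)) (h : ℕ → ℝ) :
    ∑ S : Finset α, sliceDensity 𝒜 #S * h #S = ∑ S ∈ 𝒜, h #S := by
  rw [← powerset_univ, sum_powerset_apply_card (fun k => sliceDensity 𝒜 k * h k), card_univ,
    ← sum_fiberwise_of_maps_to (g := card) (t := range (Fintype.card α + 1))
      fun S _ => mem_range_succ_iff.2 S.card_le_univ]
  refine sum_congr rfl fun k hk => ?_
  have hpos : 0 < (Fintype.card α).choose k := Nat.choose_pos (mem_range_succ_iff.1 hk)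
  rw [sum_congr rfl fun S hS => by rw [(mem_filter.1 hS).2], sum_const, nsmul_eq_mul,
    nsmul_eq_mul, sliceDensity, ← mul_assoc, mul_div_cancel₀ _ (by positivity)]
  rfl

variable [DecidableEq α]

theorem sliceDensity_le_sliceDensity_succ (h𝒜 : IsUpperSet (𝒜 : Set (Finset α))) {k : ℕ}
    (hk : k < Fintype.card α) : sliceDensity 𝒜 k ≤ sliceDensity 𝒜 (k + 1) := by
  have hlym := local_lubell_yamamoto_meshalkin_inequality_div (𝕜 := ℝ)
    (Nat.sub_ne_zero_of_lt hk) (sized_slice (𝒜 := 𝒜) (r := k)).compls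
  rw [card_compls, shadow_compls, card_compls, Nat.choose_symm hk.le,
    Nat.sub_sub, Nat.choose_symm hk] at hlym
  refine hlym.trans (div_le_div_of_nonneg_right ?_ (Nat.cast_nonneg _))
  gcongr
  intro T hT
  obtain ⟨S, hS, a, ha, rfl⟩ := mem_upShadow_iff.1 hT
  rw [mem_slice] at hS ⊢
  exact ⟨h𝒜 (subset_insert a S) hS.1, by rw [card_insert_of_notMem ha, hS.2]⟩

theorem monovary_sliceDensity_card (h𝒜 : IsUpperSet (𝒜 : Set (Finset α))) :
    Monovary (fun S : Finset α => sliceDensity 𝒜 #S) (fun S => (#S : ℝ)) := by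
  intro S T hST
  have hmono : MonotoneOn (sliceDensity 𝒜) (Set.Iic (Fintype.card α)) :=
    monotoneOn_of_le_succ Set.ordConnected_Iic fun k _ _ hk =>
      sliceDensity_le_sliceDensity_succ h𝒜 (Order.succ_le_iff.1 hk)
  exact hmono S.card_le_univ T.card_le_univ (Nat.cast_lt.1 hST).le

theorem sum_univ_erase_empty_sliceDensity (hempty : ∅ ∉ 𝒜) :
    ∑ S ∈ (univ : Finset (Finset α)).erase ∅, sliceDensity 𝒜 #S = #𝒜 := by
  have h0 : sliceDensity 𝒜 #(∅ : Finset α) = 0 := by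
    simp [sliceDensity, slice, card_eq_zero, hempty]
  rw [sum_erase (f := fun S => sliceDensity 𝒜 #S) univ h0]
  simpa using sum_sliceDensity_card_mul 𝒜 1

theorem sum_univ_erase_empty_sliceDensity_mul_card :
    ∑ S ∈ (univ : Finset (Finset α)).erase ∅, sliceDensity 𝒜 #S * #S = ∑ S ∈ 𝒜, (#S : ℝ) := by
  rw [sum_erase (f := fun S => sliceDensity 𝒜 #S * #S) univ (by simp)]
  exact sum_sliceDensity_card_mul 𝒜 Nat.cast

theorem card_mul_sum_card_univ_erase_empty_le (h𝒜 : IsUpperSet (𝒜 : Set (Finset α)))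
    (hempty : ∅ ∉ 𝒜) :
    (#𝒜 : ℝ) * ∑ S ∈ (univ : Finset (Finset α)).erase ∅, (#S : ℝ) ≤
      #((univ : Finset (Finset α)).erase ∅) * ∑ S ∈ 𝒜, (#S : ℝ) := by
  have := ((monovary_sliceDensity_card h𝒜).monovaryOn
    ((univ : Finset (Finset α)).erase ∅)).sum_mul_sum_le_card_mul_sum
  rwa [sum_univ_erase_empty_sliceDensity hempty,
    sum_univ_erase_empty_sliceDensity_mul_card] at this

theorem card_mul_sum_card_univ_erase_empty_lt (h𝒜 : IsUpperSet (𝒜 : Set (Finset α)))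
    (hempty : ∅ ∉ 𝒜) (hne : 𝒜.Nonempty)
    (hne_univ : 𝒜 ≠ (univ : Finset (Finset α)).erase ∅) :
    (#𝒜 : ℝ) * ∑ S ∈ (univ : Finset (Finset α)).erase ∅, (#S : ℝ) <
      #((univ : Finset (Finset α)).erase ∅) * ∑ S ∈ 𝒜, (#S : ℝ) := by
  obtain ⟨S, hSP, hS𝒜⟩ := exists_of_ssubset
    (ssubset_iff_subset_ne.2 ⟨subset_erase.2 ⟨subset_univ 𝒜, hempty⟩, hne_univ⟩)
  have huniv : univ ∈ 𝒜 := hne.elim fun T hT => h𝒜 (subset_univ T) hT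
  have hS_lt : #S < #(univ : Finset α) :=
    card_lt_card (ssubset_univ_iff.2 fun h => hS𝒜 (h ▸ huniv))
  have hdensity : sliceDensity 𝒜 #S < sliceDensity 𝒜 #(univ : Finset α) :=
    (sliceDensity_card_lt_one hS𝒜).trans_eq
      (sliceDensity_card_eq_one fun T hT => eq_univ_of_card T hT ▸ huniv).symm
  have := ((monovary_sliceDensity_card h𝒜).monovaryOn
    ((univ : Finset (Finset α)).erase ∅)).sum_mul_sum_lt_card_mul_sum hSP
      (mem_erase.2 ⟨fun h => hempty (h ▸ huniv), mem_univ _⟩) hdensity (Nat.cast_lt.2 hS_lt)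
  rwa [sum_univ_erase_empty_sliceDensity hempty,
    sum_univ_erase_empty_sliceDensity_mul_card] at this

end SliceDensity

section AvgCard

variable {α : Type*} [Fintype α] [DecidableEq α] {𝒜 : Finset (Finset α)}

noncomputable def avgCard (𝒜 : Finset (Finset α)) : ℝ := (∑ S ∈ 𝒜, (#S : ℝ)) / #𝒜

theorem avgCard_univ_erase_empty :
    avgCard ((univ : Finset (Finset α)).erase ∅) =
      Fintype.card α * 2 ^ (Fintype.card α - 1) / (2 ^ Fintype.card α - 1) := by
  have hsum : ∑ S ∈ (univ : Finset (Finset α)).erase ∅, (#S : ℝ) =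
      Fintype.card α * 2 ^ (Fintype.card α - 1) := by
    rw [sum_erase (f := fun S => (#S : ℝ)) univ (by simp), ← powerset_univ,
      sum_powerset_apply_card (fun k => (k : ℝ)), card_univ]
    simp only [nsmul_eq_mul, mul_comm ((Nat.choose _ _ : ℕ) : ℝ)]
    exact_mod_cast Nat.sum_range_mul_choose (Fintype.card α)
  have hcard : #((univ : Finset (Finset α)).erase ∅) = (2 : ℝ) ^ Fintype.card α - 1 := by
    rw [card_erase_of_mem (mem_univ _), card_univ, Fintype.card_finset,
      Nat.cast_sub Nat.one_le_two_pow]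
    push_cast
    rfl
  rw [avgCard, hsum, hcard]

theorem avgCard_univ_erase_empty_le (h𝒜 : IsUpperSet (𝒜 : Set (Finset α))) (hempty : ∅ ∉ 𝒜)
    (hne : 𝒜.Nonempty) : avgCard ((univ : Finset (Finset α)).erase ∅) ≤ avgCard 𝒜 := by
  have hP := hne.mono (subset_erase.2 ⟨subset_univ 𝒜, hempty⟩)
  rw [avgCard, avgCard, div_le_div_iff₀ (Nat.cast_pos.2 (card_pos.2 hP))
    (Nat.cast_pos.2 (card_pos.2 hne)), mul_comm, mul_comm (∑ S ∈ 𝒜, _)]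
  exact card_mul_sum_card_univ_erase_empty_le h𝒜 hempty

theorem avgCard_univ_erase_empty_lt (h𝒜 : IsUpperSet (𝒜 : Set (Finset α))) (hempty : ∅ ∉ 𝒜)
    (hne : 𝒜.Nonempty) (hne_univ : 𝒜 ≠ (univ : Finset (Finset α)).erase ∅) :
    avgCard ((univ : Finset (Finset α)).erase ∅) < avgCard 𝒜 := by
  have hP := hne.mono (subset_erase.2 ⟨subset_univ 𝒜, hempty⟩)
  rw [avgCard, avgCard, div_lt_div_iff₀ (Nat.cast_pos.2 (card_pos.2 hP))
    (Nat.cast_pos.2 (card_pos.2 hne)), mul_comm, mul_comm (∑ S ∈ 𝒜, _)]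
  exact card_mul_sum_card_univ_erase_empty_lt h𝒜 hempty hne hne_univ

end AvgCard

end Finset

namespace SimpleGraph

theorem nonempty_iso_top_iff {V W : Type*} {G : SimpleGraph V} (e : V ≃ W) :
    Nonempty (G ≃g (⊤ : SimpleGraph W)) ↔ G = ⊤ := by
  refine ⟨fun ⟨f⟩ => ?_, fun h => h ▸ ⟨Iso.completeGraph e⟩⟩
  ext u v
  rw [← f.map_rel_iff, top_adj, top_adj, f.injective.ne_iff]

variable {V : Type*} [Fintype V] {G : SimpleGraph V}

theorem avd_eq_avgCard : G.avd = avgCard G.domSets := rfl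

theorem mem_domSets {S : Finset V} : S ∈ G.domSets ↔ G.IsDomSet S := by
  simp [domSets]

theorem isUpperSet_domSets : IsUpperSet (G.domSets : Set (Finset V)) := by
  intro S T hST hS
  rw [mem_coe, mem_domSets] at *
  exact fun v => (hS v).imp (@hST v) fun ⟨u, hu, huv⟩ => ⟨u, hST hu, huv⟩

theorem univ_mem_domSets : univ ∈ G.domSets :=
  mem_domSets.2 fun v => Or.inl (mem_univ v)

theorem empty_notMem_domSets [Nonempty V] : ∅ ∉ G.domSets := fun h =>
  (mem_domSets.1 h (Classical.arbitrary V)).elim (notMem_empty _)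
    fun ⟨u, hu, _⟩ => notMem_empty u hu

theorem domSets_eq_univ_erase_empty_iff [DecidableEq V] [Nonempty V] :
    G.domSets = (univ : Finset (Finset V)).erase ∅ ↔ G = ⊤ := by
  constructor
  · intro h
    ext u v
    refine ⟨G.ne_of_adj, fun huv => ?_⟩
    have hu : {u} ∈ G.domSets := h ▸ mem_erase.2 ⟨singleton_ne_empty u, mem_univ _⟩
    obtain hv | ⟨w, hw, hwv⟩ := mem_domSets.1 hu v
    · exact absurd (mem_singleton.1 hv).symm huv
    · rwa [mem_singleton.1 hw] at hwv
  · rintro rfl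
    ext S
    rw [mem_domSets, mem_erase, ← nonempty_iff_ne_empty]
    refine ⟨fun hS => ⟨?_, mem_univ S⟩, fun ⟨⟨u, hu⟩, _⟩ v => ?_⟩
    · obtain hv | ⟨u, hu, _⟩ := hS (Classical.arbitrary V)
      exacts [⟨_, hv⟩, ⟨u, hu⟩]
    · exact (em (v ∈ S)).imp_right fun hv => ⟨u, hu, fun h => hv (h ▸ hu)⟩

end SimpleGraph

/-- Every graph of order `n ≥ 1` has `avd(G) ≥ n·2^(n-1)/(2^n - 1)`, with equality
if and only if `G` is isomorphic to the complete graph `K_n`. -/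
theorem avd_lower_bound {V : Type*} [Fintype V] (G : SimpleGraph V) (n : ℕ)
    (hn : n = Fintype.card V) (h1 : 1 ≤ n) :
    ((n : ℝ) * 2 ^ (n - 1)) / (2 ^ n - 1) ≤ G.avd ∧
      (G.avd = ((n : ℝ) * 2 ^ (n - 1)) / (2 ^ n - 1) ↔
        Nonempty (G ≃g (⊤ : SimpleGraph (Fin n)))) := by
  classical
  subst hn
  have : Nonempty V := Fintype.card_pos_iff.1 h1
  have hupper := G.isUpperSet_domSets
  have hempty := G.empty_notMem_domSets
  have hne : G.domSets.Nonempty := ⟨univ, G.univ_mem_domSets⟩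
  rw [G.avd_eq_avgCard, ← avgCard_univ_erase_empty,
    G.nonempty_iso_top_iff (Fintype.equivFin V), ← G.domSets_eq_univ_erase_empty_iff]
  refine ⟨avgCard_univ_erase_empty_le hupper hempty hne, fun h => ?_, fun h => h ▸ rfl⟩
  by_contra hne_univ
  exact (avgCard_univ_erase_empty_lt hupper hempty hne hne_univ).ne' h
end

section
/- Let G be a finite simple graph with n ≥ 2 vertices and minimum degree δ ≥ 1. Then avd(G) ≤ (2n(2^δ − 1) + n)/(3(2^δ − 1) + 1). -/
open Finset

section Aux

variable {V : Type*} [Fintype V]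

private lemma mem_domSets_iff (G : SimpleGraph V) (S : Finset V) :
    S ∈ G.domSets ↔ G.IsDomSet S := by
  simp only [SimpleGraph.domSets, Finset.mem_filter, Finset.mem_univ, true_and]

/-- an outside private neighbour `w` of `v` w.r.t. `S` : `w ∉ S`, `w` is adjacent to `v` and
to no other member of `S`. -/
private def DPriv (G : SimpleGraph V) (S : Finset V) (v w : V) : Prop :=
  w ∉ S ∧ G.Adj v w ∧ ∀ u ∈ S, G.Adj u w → u = v

variable [DecidableEq V]

private noncomputable def A1set (G : SimpleGraph V) (S : Finset V) : Finset V :=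
  @Finset.filter _ (fun v => S.erase v ∈ G.domSets) (Classical.decPred _) S

private noncomputable def Ecset (G : SimpleGraph V) (S : Finset V) : Finset V :=
  @Finset.filter _ (fun v => S.erase v ∉ G.domSets ∧ ∃ w, DPriv G S v w)
    (Classical.decPred _) S

private noncomputable def Gcset (G : SimpleGraph V) (S : Finset V) : Finset V :=
  @Finset.filter _ (fun v => S.erase v ∉ G.domSets ∧ ¬ ∃ w, DPriv G S v w)
    (Classical.decPred _) S


private lemma mem_A1set (G : SimpleGraph V) (S : Finset V) (v : V) :
    v ∈ A1set G S ↔ v ∈ S ∧ S.erase v ∈ G.domSets := by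
  exact @Finset.mem_filter _ _ (Classical.decPred _) _ _

private lemma mem_Ecset (G : SimpleGraph V) (S : Finset V) (v : V) :
    v ∈ Ecset G S ↔ v ∈ S ∧ (S.erase v ∉ G.domSets ∧ ∃ w, DPriv G S v w) := by
  exact @Finset.mem_filter _ _ (Classical.decPred _) _ _

private lemma mem_Gcset (G : SimpleGraph V) (S : Finset V) (v : V) :
    v ∈ Gcset G S ↔ v ∈ S ∧ (S.erase v ∉ G.domSets ∧ ¬ ∃ w, DPriv G S v w) := by
  exact @Finset.mem_filter _ _ (Classical.decPred _) _ _

private noncomputable def pairsOf (G : SimpleGraph V) (F : Finset V → Finset V) :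
    Finset (Finset V × V) :=
  G.domSets.biUnion fun S => {S} ×ˢ F S

private lemma mem_pairsOf (G : SimpleGraph V) (F : Finset V → Finset V) (p : Finset V × V) :
    p ∈ pairsOf G F ↔ p.1 ∈ G.domSets ∧ p.2 ∈ F p.1 := by
  unfold pairsOf
  rw [Finset.mem_biUnion]
  constructor
  · rintro ⟨S, hS, hp⟩
    rw [Finset.mem_product, Finset.mem_singleton] at hp
    exact ⟨hp.1 ▸ hS, hp.1 ▸ hp.2⟩
  · rintro ⟨h1, h2⟩
    exact ⟨p.1, h1, by rw [Finset.mem_product, Finset.mem_singleton]; exact ⟨rfl, h2⟩⟩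

private lemma card_pairsOf (G : SimpleGraph V) (F : Finset V → Finset V) :
    (pairsOf G F).card = ∑ S ∈ G.domSets, (F S).card := by
  unfold pairsOf
  rw [Finset.card_biUnion]
  · exact Finset.sum_congr rfl fun S _ => by
      rw [Finset.card_product, Finset.card_singleton, one_mul]
  · intro x hx y hy hxy
    simp only [Function.onFun]
    rw [Finset.disjoint_left]
    intro p hp hq
    rw [Finset.mem_product, Finset.mem_singleton] at hp hq
    exact hxy (by rw [← hp.1, hq.1])

private lemma Gcset_isolated (G : SimpleGraph V) {S : Finset V} (hS : S ∈ G.domSets)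
    {v : V} (hv : v ∈ Gcset G S) : ∀ u ∈ S, ¬ G.Adj u v := by
  rw [mem_Gcset] at hv
  obtain ⟨hvS, hvc, hvw⟩ := hv
  intro u hu hadj
  rw [mem_domSets_iff] at hvc
  unfold SimpleGraph.IsDomSet at hvc
  push_neg at hvc
  obtain ⟨y, hy1, hy2⟩ := hvc
  by_cases hyS : y ∈ S
  · have hyv : y = v := by
      by_contra hne
      exact hy1 (Finset.mem_erase.mpr ⟨hne, hyS⟩)
    subst hyv
    have huy : u ≠ y := fun h => G.irrefl (h ▸ hadj)
    exact hy2 u (Finset.mem_erase.mpr ⟨huy, hu⟩) hadj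
  · rcases (mem_domSets_iff G S).mp hS y with h | ⟨u', hu', hadj'⟩
    · exact hyS h
    · have hu'v : u' = v := by
        by_contra hne
        exact hy2 u' (Finset.mem_erase.mpr ⟨hne, hu'⟩) hadj'
      subst hu'v
      refine hvw ⟨y, hyS, hadj', fun u'' hu'' hadj'' => ?_⟩
      by_contra hne
      exact hy2 u'' (Finset.mem_erase.mpr ⟨hne, hu''⟩) hadj''

private lemma Gcset_swap_mem (G : SimpleGraph V) [DecidableRel G.Adj] {S : Finset V} (hS : S ∈ G.domSets)
    {v : V} (hv : v ∈ Gcset G S) {U : Finset V} (hU : U ⊆ G.neighborFinset v)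
    (hUne : U.Nonempty) : S.erase v ∪ U ∈ G.domSets := by
  have hv' := hv
  rw [mem_Gcset] at hv'
  obtain ⟨hvS, hvc, hvw⟩ := hv'
  rw [mem_domSets_iff]
  intro y
  by_cases hyv : y = v
  · subst hyv
    obtain ⟨u, hu⟩ := hUne
    have hadj : G.Adj y u := by
      have := hU hu
      rwa [SimpleGraph.mem_neighborFinset] at this
    exact Or.inr ⟨u, Finset.mem_union_right _ hu, hadj.symm⟩
  · by_cases hyS : y ∈ S
    · exact Or.inl (Finset.mem_union_left _ (Finset.mem_erase.mpr ⟨hyv, hyS⟩))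
    · rcases (mem_domSets_iff G S).mp hS y with h | ⟨u, hu, hadj⟩
      · exact absurd h hyS
      · by_cases hex : ∃ u' ∈ S, u' ≠ v ∧ G.Adj u' y
        · obtain ⟨u', hu', hne, hadj'⟩ := hex
          exact Or.inr ⟨u', Finset.mem_union_left _ (Finset.mem_erase.mpr ⟨hne, hu'⟩), hadj'⟩
        · exfalso
          push_neg at hex
          have huv : u = v := by
            by_contra hne
            exact hex u hu hne hadj
          subst huv
          refine hvw ⟨y, hyS, hadj, fun u'' hu'' hadj'' => ?_⟩
          by_contra hne
          exact hex u'' hu'' hne hadj''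

private lemma Gcset_swap_not_mem (G : SimpleGraph V) [DecidableRel G.Adj] {S : Finset V}
    {v : V} {U : Finset V} (hU : U ⊆ G.neighborFinset v) :
    v ∉ S.erase v ∪ U := by
  rw [Finset.mem_union]
  rintro (h | h)
  · exact Finset.notMem_erase v S h
  · have := hU h
    rw [SimpleGraph.mem_neighborFinset] at this
    exact G.irrefl this

private theorem key_count (G : SimpleGraph V) [DecidableRel G.Adj] (δ : ℕ) (hdeg : ∀ v : V, δ ≤ G.degree v) :
    (3 * (2 ^ δ - 1) + 1) * (∑ S ∈ G.domSets, S.card) ≤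
      (2 * (2 ^ δ - 1) + 1) * (Fintype.card V * (G.domSets).card) := by
  classical
  -- choose canonical δ-subsets of the neighbourhoods
  have hNv : ∀ v : V, ∃ N : Finset V, N ⊆ G.neighborFinset v ∧ N.card = δ := by
    intro v
    exact Finset.exists_subset_card_eq
      (by rw [SimpleGraph.card_neighborFinset_eq_degree]; exact hdeg v)
  choose Nv hNvsub hNvcard using hNv
  set q := (pairsOf G (fun S => Finset.univ \ S)).card with hq
  -- injection 1 : removable vertices
  have inj1 : (pairsOf G (A1set G)).card ≤ q := by
    apply Finset.card_le_card_of_injOn (fun p => (p.1.erase p.2, p.2))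
    · intro p hp
      rw [Finset.mem_coe, mem_pairsOf] at hp
      obtain ⟨hp1, hp2⟩ := hp
      rw [mem_A1set] at hp2
      beta_reduce
      rw [Finset.mem_coe, mem_pairsOf]
      refine ⟨hp2.2, ?_⟩
      simp only [Finset.mem_sdiff, Finset.mem_univ, true_and]
      exact Finset.notMem_erase _ _
    · rintro ⟨S₁, v₁⟩ h₁ ⟨S₂, v₂⟩ h₂ heq
      rw [Finset.mem_coe, mem_pairsOf] at h₁ h₂
      simp only [Prod.mk.injEq] at heq
      obtain ⟨he, hv⟩ := heq
      subst hv
      have hv₁ : v₁ ∈ S₁ := by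
        have := h₁.2
        rw [mem_A1set] at this
        exact this.1
      have hv₂ : v₁ ∈ S₂ := by
        have := h₂.2
        rw [mem_A1set] at this
        exact this.1
      have hSS : S₁ = S₂ := by
        rw [← Finset.insert_erase hv₁, he, Finset.insert_erase hv₂]
      rw [hSS]
  -- injection 2 : critical vertices with an outside private neighbour
  have inj2 : (pairsOf G (Ecset G)).card ≤ q := by
    apply Finset.card_le_card_of_injOn
      (fun p => (p.1, if h : ∃ w, DPriv G p.1 p.2 w then h.choose else p.2))
    · intro p hp
      rw [Finset.mem_coe, mem_pairsOf] at hp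
      obtain ⟨hp1, hp2⟩ := hp
      rw [mem_Ecset] at hp2
      obtain ⟨hpS, hpc, hex⟩ := hp2
      beta_reduce
      rw [Finset.mem_coe, mem_pairsOf]
      refine ⟨hp1, ?_⟩
      rw [dif_pos hex]
      simp only [Finset.mem_sdiff, Finset.mem_univ, true_and]
      exact hex.choose_spec.1
    · rintro ⟨S₁, v₁⟩ h₁ ⟨S₂, v₂⟩ h₂ heq
      rw [Finset.mem_coe, mem_pairsOf] at h₁ h₂
      obtain ⟨hS₁, hv₁⟩ := h₁
      obtain ⟨hS₂, hv₂⟩ := h₂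
      rw [mem_Ecset] at hv₁ hv₂
      obtain ⟨hv₁S, _, hex₁⟩ := hv₁
      obtain ⟨hv₂S, _, hex₂⟩ := hv₂
      simp only [Prod.mk.injEq] at heq
      obtain ⟨hSS, hww⟩ := heq
      subst hSS
      rw [dif_pos hex₁, dif_pos hex₂] at hww
      have spec₁ := hex₁.choose_spec
      have spec₂ := hex₂.choose_spec
      have hvv : v₂ = v₁ := spec₁.2.2 v₂ hv₂S (hww.symm ▸ spec₂.2.1)
      rw [hvv]
  -- injection 3 : critical isolated vertices, with multiplicity 2^δ - 1
  have inj3 : (2 ^ δ - 1) * (pairsOf G (Gcset G)).card ≤ q := by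
    set T3 := (pairsOf G (Gcset G)).biUnion
      (fun p => ({p} : Finset (Finset V × V)) ×ˢ ((Nv p.2).powerset.erase ∅)) with hT3
    have hT3card : T3.card = (2 ^ δ - 1) * (pairsOf G (Gcset G)).card := by
      rw [hT3, Finset.card_biUnion]
      · have hc : ∀ p ∈ pairsOf G (Gcset G),
            (({p} : Finset (Finset V × V)) ×ˢ ((Nv p.2).powerset.erase ∅)).card
              = 2 ^ δ - 1 := by
          intro p _
          rw [Finset.card_product, Finset.card_singleton, one_mul,
            Finset.card_erase_of_mem (Finset.empty_mem_powerset _), Finset.card_powerset,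
            hNvcard]
        rw [Finset.sum_congr rfl hc, Finset.sum_const, smul_eq_mul, mul_comm]
      · intro x hx y hy hxy
        simp only [Function.onFun]
        rw [Finset.disjoint_left]
        intro p hp hq
        rw [Finset.mem_product, Finset.mem_singleton] at hp hq
        exact hxy (by rw [← hp.1, hq.1])
    rw [← hT3card]
    apply Finset.card_le_card_of_injOn (fun r => (r.1.1.erase r.1.2 ∪ r.2, r.1.2))
    · intro x hx
      simp only [Finset.mem_coe, hT3, Finset.mem_biUnion] at hx
      obtain ⟨p, hp, hx2⟩ := hx
      rw [Finset.mem_product, Finset.mem_singleton] at hx2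
      obtain ⟨hx1, hxU⟩ := hx2
      rw [← hx1] at hp hxU
      rw [Finset.mem_erase, Finset.mem_powerset] at hxU
      obtain ⟨hxne, hxsub⟩ := hxU
      rw [mem_pairsOf] at hp
      obtain ⟨hpD, hpG⟩ := hp
      beta_reduce
      rw [Finset.mem_coe, mem_pairsOf]
      constructor
      · exact Gcset_swap_mem G hpD hpG (hxsub.trans (hNvsub _))
          (Finset.nonempty_iff_ne_empty.mpr hxne)
      · simp only [Finset.mem_sdiff, Finset.mem_univ, true_and]
        exact Gcset_swap_not_mem G (hxsub.trans (hNvsub _))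
    · rintro ⟨⟨S₁, v₁⟩, U₁⟩ h₁ ⟨⟨S₂, v₂⟩, U₂⟩ h₂ heq
      simp only [Finset.mem_coe, hT3, Finset.mem_biUnion] at h₁ h₂
      obtain ⟨p₁, hp₁, hm₁⟩ := h₁
      obtain ⟨p₂, hp₂, hm₂⟩ := h₂
      rw [Finset.mem_product, Finset.mem_singleton] at hm₁ hm₂
      obtain ⟨hfst₁, hU₁⟩ := hm₁
      obtain ⟨hfst₂, hU₂⟩ := hm₂
      rw [← hfst₁] at hp₁ hU₁
      rw [← hfst₂] at hp₂ hU₂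
      rw [mem_pairsOf] at hp₁ hp₂
      obtain ⟨hS₁D, hv₁G⟩ := hp₁
      obtain ⟨hS₂D, hv₂G⟩ := hp₂
      rw [Finset.mem_erase, Finset.mem_powerset] at hU₁ hU₂
      simp only [Prod.mk.injEq] at heq
      obtain ⟨hTT, hvv⟩ := heq
      subst hvv
      have hdisj : ∀ {S : Finset V}, S ∈ G.domSets → v₁ ∈ Gcset G S →
          Disjoint (S.erase v₁) (Nv v₁) := by
        intro S hSD hvG
        rw [Finset.disjoint_right]
        intro x hx hxe
        have hxS : x ∈ S := Finset.mem_of_mem_erase hxe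
        have hadj : G.Adj v₁ x := by
          have := hNvsub v₁ hx
          rwa [SimpleGraph.mem_neighborFinset] at this
        exact Gcset_isolated G hSD hvG x hxS hadj.symm
      have hUU : U₁ = U₂ := by
        have e₁ : (S₁.erase v₁ ∪ U₁) ∩ Nv v₁ = U₁ := by
          rw [Finset.union_inter_distrib_right,
            Finset.disjoint_iff_inter_eq_empty.mp (hdisj hS₁D hv₁G),
            Finset.empty_union, Finset.inter_eq_left.mpr hU₁.2]
        have e₂ : (S₂.erase v₁ ∪ U₂) ∩ Nv v₁ = U₂ := by
          rw [Finset.union_inter_distrib_right,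
            Finset.disjoint_iff_inter_eq_empty.mp (hdisj hS₂D hv₂G),
            Finset.empty_union, Finset.inter_eq_left.mpr hU₂.2]
        rw [← e₁, hTT, e₂]
      have hSS : S₁ = S₂ := by
        have e₁ : (S₁.erase v₁ ∪ U₁) \ Nv v₁ = S₁.erase v₁ := by
          rw [Finset.union_sdiff_distrib,
            Finset.sdiff_eq_empty_iff_subset.mpr hU₁.2,
            Finset.union_empty,
            Finset.sdiff_eq_self_iff_disjoint.mpr (hdisj hS₁D hv₁G)]
        have e₂ : (S₂.erase v₁ ∪ U₂) \ Nv v₁ = S₂.erase v₁ := by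
          rw [Finset.union_sdiff_distrib,
            Finset.sdiff_eq_empty_iff_subset.mpr hU₂.2,
            Finset.union_empty,
            Finset.sdiff_eq_self_iff_disjoint.mpr (hdisj hS₂D hv₂G)]
        have hv₁S : v₁ ∈ S₁ := by
          have := hv₁G
          rw [mem_Gcset] at this
          exact this.1
        have hv₂S : v₁ ∈ S₂ := by
          have := hv₂G
          rw [mem_Gcset] at this
          exact this.1
        rw [← Finset.insert_erase hv₁S, ← e₁, hTT, e₂, Finset.insert_erase hv₂S]
      rw [hSS, hUU]
  -- the per-set partition of cardinalities
  have card_split : ∀ S ∈ G.domSets,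
      S.card = (A1set G S).card + ((Ecset G S).card + (Gcset G S).card) := by
    intro S hS
    have hd1 : Disjoint (A1set G S) (Ecset G S) := by
      rw [Finset.disjoint_left]
      intro v hv hv'
      rw [mem_A1set] at hv
      rw [mem_Ecset] at hv'
      exact hv'.2.1 hv.2
    have hd2 : Disjoint (A1set G S) (Gcset G S) := by
      rw [Finset.disjoint_left]
      intro v hv hv'
      rw [mem_A1set] at hv
      rw [mem_Gcset] at hv'
      exact hv'.2.1 hv.2
    have hd3 : Disjoint (Ecset G S) (Gcset G S) := by
      rw [Finset.disjoint_left]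
      intro v hv hv'
      rw [mem_Ecset] at hv
      rw [mem_Gcset] at hv'
      exact hv'.2.2 hv.2.2
    have hunion : A1set G S ∪ (Ecset G S ∪ Gcset G S) = S := by
      ext v
      simp only [Finset.mem_union, mem_A1set, mem_Ecset, mem_Gcset]
      constructor
      · rintro (h | h | h) <;> exact h.1
      · intro hvS
        by_cases h1 : S.erase v ∈ G.domSets
        · exact Or.inl ⟨hvS, h1⟩
        · by_cases h2 : ∃ w, DPriv G S v w
          · exact Or.inr (Or.inl ⟨hvS, h1, h2⟩)
          · exact Or.inr (Or.inr ⟨hvS, h1, h2⟩)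
    calc S.card = (A1set G S ∪ (Ecset G S ∪ Gcset G S)).card := by rw [hunion]
      _ = (A1set G S).card + (Ecset G S ∪ Gcset G S).card := by
          rw [Finset.card_union_of_disjoint
            (Finset.disjoint_union_right.mpr ⟨hd1, hd2⟩)]
      _ = (A1set G S).card + ((Ecset G S).card + (Gcset G S).card) := by
          rw [Finset.card_union_of_disjoint hd3]
  have sum_split : ∑ S ∈ G.domSets, S.card
      = (pairsOf G (A1set G)).card
        + ((pairsOf G (Ecset G)).card + (pairsOf G (Gcset G)).card) := by
    rw [card_pairsOf, card_pairsOf, card_pairsOf, ← Finset.sum_add_distrib,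
      ← Finset.sum_add_distrib]
    exact Finset.sum_congr rfl card_split
  have qsum : q + ∑ S ∈ G.domSets, S.card = Fintype.card V * (G.domSets).card := by
    rw [hq, card_pairsOf, ← Finset.sum_add_distrib]
    have hc : ∀ S ∈ G.domSets, (Finset.univ \ S).card + S.card = Fintype.card V := by
      intro S _
      rw [Finset.card_sdiff_add_card_eq_card (Finset.subset_univ S), Finset.card_univ]
    rw [Finset.sum_congr rfl hc, Finset.sum_const, smul_eq_mul, mul_comm]
  have hmain : (2 ^ δ - 1) * (∑ S ∈ G.domSets, S.card) ≤ (2 * (2 ^ δ - 1) + 1) * q := by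
    rw [sum_split]
    calc (2 ^ δ - 1) * ((pairsOf G (A1set G)).card
          + ((pairsOf G (Ecset G)).card + (pairsOf G (Gcset G)).card))
        = (2 ^ δ - 1) * (pairsOf G (A1set G)).card
            + ((2 ^ δ - 1) * (pairsOf G (Ecset G)).card
            + (2 ^ δ - 1) * (pairsOf G (Gcset G)).card) := by ring
      _ ≤ (2 ^ δ - 1) * q + ((2 ^ δ - 1) * q + q) :=
          add_le_add (mul_le_mul_right inj1 _)
            (add_le_add (mul_le_mul_right inj2 _) inj3)
      _ = (2 * (2 ^ δ - 1) + 1) * q := by ring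
  calc (3 * (2 ^ δ - 1) + 1) * (∑ S ∈ G.domSets, S.card)
      = (2 ^ δ - 1) * (∑ S ∈ G.domSets, S.card)
        + (2 * (2 ^ δ - 1) + 1) * (∑ S ∈ G.domSets, S.card) := by ring
    _ ≤ (2 * (2 ^ δ - 1) + 1) * q
        + (2 * (2 ^ δ - 1) + 1) * (∑ S ∈ G.domSets, S.card) := add_le_add_left hmain _
    _ = (2 * (2 ^ δ - 1) + 1) * (q + ∑ S ∈ G.domSets, S.card) := by ring
    _ = (2 * (2 ^ δ - 1) + 1) * (Fintype.card V * (G.domSets).card) := by rw [qsum]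

end Aux

/-- For a graph `G` with `n ≥ 2` vertices and minimum degree `δ ≥ 1`,
`avd(G) ≤ (2n(2^δ − 1) + n)/(3(2^δ − 1) + 1)`. -/
theorem avd_le_of_minDegree {V : Type*} [Fintype V] (G : SimpleGraph V)
    [DecidableRel G.Adj] (n δ : ℕ) (hn : n = Fintype.card V) (h2 : 2 ≤ n)
    (hδ : δ = G.minDegree) (hδ1 : 1 ≤ δ) :
    G.avd ≤ (2 * (n : ℝ) * (2 ^ δ - 1) + n) / (3 * (2 ^ δ - 1) + 1) := by
  classical
  have hcard2 : 2 ≤ Fintype.card V := hn ▸ h2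
  have hpos : 0 < Fintype.card V := by omega
  have hne : Nonempty V := Fintype.card_pos_iff.mp hpos
  have hdeg : ∀ v : V, δ ≤ G.degree v := by
    intro v
    rw [hδ]
    exact G.minDegree_le_degree v
  have key := key_count G δ hdeg
  rw [← hn] at key
  have hDne : (Finset.univ : Finset V) ∈ G.domSets := by
    rw [mem_domSets_iff]
    intro v
    exact Or.inl (Finset.mem_univ v)
  have hDpos : 0 < (G.domSets).card := Finset.card_pos.mpr ⟨_, hDne⟩
  have h2pow : (1 : ℕ) ≤ 2 ^ δ := Nat.one_le_two_pow
  have hpowR : (1 : ℝ) ≤ (2 : ℝ) ^ δ := by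
    have : ((1 : ℕ) : ℝ) ≤ ((2 ^ δ : ℕ) : ℝ) := Nat.cast_le.mpr h2pow
    push_cast at this
    exact this
  unfold SimpleGraph.avd
  rw [div_le_div_iff₀ (by exact_mod_cast hDpos) (by nlinarith)]
  have keyR : ((3 * (2 ^ δ - 1) + 1 : ℕ) : ℝ) * ((∑ S ∈ G.domSets, S.card : ℕ) : ℝ)
      ≤ ((2 * (2 ^ δ - 1) + 1 : ℕ) : ℝ) * ((n * (G.domSets).card : ℕ) : ℝ) := by
    exact_mod_cast key
  push_cast [Nat.cast_sub h2pow] at keyR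
  push_cast
  nlinarith [keyR]
end

section
/- For any finite simple graph G, Σ_{S ∈ D(G)} |N₁(S)| = Σ_{e ∈ E(G)} |D(G) \ D(G − e)|, where G − e denotes the graph obtained from G by deleting edge e, and D(G) \ D(G − e) is the collection of dominating sets of G that are not dominating sets of G − e. -/
open Finset

/-- The closed neighbourhood `N[v]` of `v`, as a finset. -/
noncomputable def SimpleGraph.closedNbhdFinset {V : Type*} [Fintype V] [DecidableEq V]
    (G : SimpleGraph V) (v : V) : Finset V :=
  insert v (@Finset.filter _ (fun u => G.Adj v u) (Classical.decPred _) Finset.univ)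

/-- `N₁(S)`: vertices outside `S` with exactly one neighbour in `S` (counting closed
neighbourhoods). -/
noncomputable def SimpleGraph.nOne {V : Type*} [Fintype V] [DecidableEq V]
    (G : SimpleGraph V) (S : Finset V) : Finset V :=
  @Finset.filter _ (fun v => (G.closedNbhdFinset v ∩ S).card = 1) (Classical.decPred _) Sᶜ

section Aux
variable {V : Type*} [Fintype V] [DecidableEq V] (G : SimpleGraph V)

lemma mem_cn {u w : V} : u ∈ G.closedNbhdFinset w ↔ u = w ∨ G.Adj w u := by
  simp [SimpleGraph.closedNbhdFinset]

lemma mem_nOne {S : Finset V} {w : V} :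
    w ∈ G.nOne S ↔ w ∉ S ∧ (G.closedNbhdFinset w ∩ S).card = 1 := by
  simp [SimpleGraph.nOne]

variable [DecidableRel G.Adj]

lemma key (S : Finset V) (hS : G.IsDomSet S) :
    (G.nOne S).card =
      (@Finset.filter _ (fun e => ¬ (G.deleteEdges {e}).IsDomSet S)
        (Classical.decPred _) G.edgeFinset).card := by
  have hsingle : ∀ w ∈ G.nOne S, ∃ a, G.closedNbhdFinset w ∩ S = {a} := by
    intro w hw
    exact Finset.card_eq_one.mp ((mem_nOne G).mp hw).2
  classical
  apply Finset.card_bij (fun w hw => s(w, (hsingle w hw).choose))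
  · intro w hw
    obtain ⟨hwS, _⟩ := (mem_nOne G).mp hw
    have hspec := (hsingle w hw).choose_spec
    set a := (hsingle w hw).choose with ha
    have haT : a ∈ G.closedNbhdFinset w ∩ S := by rw [hspec]; exact Finset.mem_singleton_self a
    have haS : a ∈ S := (Finset.mem_inter.mp haT).2
    have hadj : G.Adj w a := by
      rcases (mem_cn G).mp (Finset.mem_inter.mp haT).1 with h | h
      · exact absurd (h ▸ haS) hwS
      · exact h
    refine (@Finset.mem_filter _ _ (Classical.decPred _) _ _).mpr ⟨?_, ?_⟩
    · exact SimpleGraph.mem_edgeFinset.mpr hadj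
    · intro hdom
      rcases hdom w with h | ⟨u, huS, hu⟩
      · exact hwS h
      · rw [SimpleGraph.deleteEdges_adj] at hu
        have huT : u ∈ G.closedNbhdFinset w ∩ S :=
          Finset.mem_inter.mpr ⟨(mem_cn G).mpr (Or.inr hu.1.symm), huS⟩
        rw [hspec, Finset.mem_singleton] at huT
        subst huT
        exact hu.2 (by rw [Set.mem_singleton_iff, Sym2.eq_swap])
  · intro w hw w' hw' heq
    obtain ⟨hwS, _⟩ := (mem_nOne G).mp hw
    obtain ⟨hw'S, _⟩ := (mem_nOne G).mp hw'
    have haS : (hsingle w hw).choose ∈ S := by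
      set a := (hsingle w hw).choose with ha
      have h1 := (hsingle w hw).choose_spec
      rw [← ha] at h1
      have h2 : a ∈ G.closedNbhdFinset w ∩ S := by
        rw [h1]; exact Finset.mem_singleton_self _
      exact (Finset.mem_inter.mp h2).2
    rcases Sym2.eq_iff.mp heq with ⟨h1, _⟩ | ⟨h1, h2⟩
    · exact h1
    · exact absurd (h2 ▸ haS) hw'S
  · intro e he
    obtain ⟨heE, hnd⟩ := (@Finset.mem_filter _ _ (Classical.decPred _) _ _).mp he
    simp only [SimpleGraph.IsDomSet, not_forall] at hnd
    obtain ⟨w, hw⟩ := hnd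
    push_neg at hw
    obtain ⟨hwS, hw2⟩ := hw
    obtain ⟨u, huS, hadj⟩ := (hS w).resolve_left hwS
    have hue : s(u, w) = e := by
      have h := hw2 u huS
      rw [SimpleGraph.deleteEdges_adj] at h
      by_contra hne
      exact h ⟨hadj, fun h' => hne (Set.mem_singleton_iff.mp h')⟩
    have hTw : G.closedNbhdFinset w ∩ S = {u} := by
      ext t
      simp only [Finset.mem_inter, Finset.mem_singleton, mem_cn]
      constructor
      · rintro ⟨h1 | h1, h2⟩
        · exact absurd (h1 ▸ h2) hwS
        · have h := hw2 t h2
          rw [SimpleGraph.deleteEdges_adj] at h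
          have hte : s(t, w) = e := by
            by_contra hne
            exact h ⟨h1.symm, fun h' => hne (Set.mem_singleton_iff.mp h')⟩
          rw [← hue] at hte
          rcases Sym2.eq_iff.mp hte with ⟨h', _⟩ | ⟨h', h''⟩
          · exact h'
          · exact absurd (h'' ▸ huS) hwS
      · rintro rfl
        exact ⟨Or.inr hadj.symm, huS⟩
    have hwmem : w ∈ G.nOne S := (mem_nOne G).mpr ⟨hwS, by rw [hTw]; simp⟩
    refine ⟨w, hwmem, ?_⟩
    set a := (hsingle w hwmem).choose with ha
    have hspec := (hsingle w hwmem).choose_spec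
    rw [← ha] at hspec
    have huu : u ∈ ({a} : Finset V) := by
      rw [← hspec, hTw]; exact Finset.mem_singleton_self u
    rw [Finset.mem_singleton] at huu
    rw [← huu, Sym2.eq_swap, hue]


end Aux

/-- `Σ_{S ∈ D(G)} |N₁(S)| = Σ_{e ∈ E(G)} |D(G) \ D(G − e)|`. -/
theorem sum_nOne_eq_sum_edges {V : Type*} [Fintype V] [DecidableEq V]
    (G : SimpleGraph V) [DecidableRel G.Adj] :
    ∑ S ∈ G.domSets, (G.nOne S).card =
      ∑ e ∈ G.edgeFinset,
        (@Finset.filter _ (fun S => ¬ (G.deleteEdges {e}).IsDomSet S)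
          (Classical.decPred _) G.domSets).card := by
  classical
  calc ∑ S ∈ G.domSets, (G.nOne S).card
      = ∑ S ∈ G.domSets, ∑ e ∈ G.edgeFinset,
          @ite ℕ (¬ (G.deleteEdges {e}).IsDomSet S)
            (Classical.decPred (fun e => ¬ (G.deleteEdges {e}).IsDomSet S) e) 1 0 := by
        refine Finset.sum_congr rfl fun S hS => ?_
        rw [key G S (Finset.mem_filter.mp hS).2, Finset.card_filter]
    _ = ∑ e ∈ G.edgeFinset, ∑ S ∈ G.domSets,
          @ite ℕ (¬ (G.deleteEdges {e}).IsDomSet S)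
            (Classical.decPred (fun e => ¬ (G.deleteEdges {e}).IsDomSet S) e) 1 0 :=
        Finset.sum_comm
    _ = ∑ e ∈ G.edgeFinset,
        (@Finset.filter _ (fun S => ¬ (G.deleteEdges {e}).IsDomSet S)
          (Classical.decPred _) G.domSets).card := by
        refine Finset.sum_congr rfl fun e _ => ?_
        rw [Finset.card_filter]
end

section
/- If T is a tree on n ≥ 2 vertices, then γ_{×2}(T) + γ(T) ≥ n + 1, where γ(T) is the domination number of T and γ_{×2}(T) is the double domination number of T. -/
open Finset

/-- The domination number: the least cardinality of a dominating set. -/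
noncomputable def SimpleGraph.domNumber {V : Type*} [Fintype V] (G : SimpleGraph V) : ℕ :=
  sInf {k | ∃ S : Finset V, G.IsDomSet S ∧ S.card = k}

/-- The double domination number: the least cardinality of a set `S` with
`|N[v] ∩ S| ≥ 2` for every vertex `v`. -/
noncomputable def SimpleGraph.doubleDomNumber {V : Type*} [Fintype V] [DecidableEq V]
    (G : SimpleGraph V) : ℕ :=
  sInf {k | ∃ S : Finset V,
    (∀ v : V, 2 ≤ (G.closedNbhdFinset v ∩ S).card) ∧ S.card = k}

/-!
Let `S` be a minimum double dominating set and `D` a minimum dominating set; if `S` is not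
everything, root the tree at a vertex `r ∉ S`. Call `u ∈ S` a top vertex if its parent is not
in `S`. Every vertex outside `S` has a child in `S`, which is a top vertex, and `r` has two such
children, so there are more top vertices than vertices outside `S`. On the other hand each top
vertex `u` has a child `x ∈ S`, and `D` must contain `u`, `x` or a child of `x`; these choices
are distinct for distinct `u`, so there are at most `|D|` top vertices. Hence
`n = |S| + |Sᶜ| < |S| + |D|`.
-/

namespace SimpleGraph

variable {V : Type*} {G : SimpleGraph V}

/-- `p` is the parent map of a rooting of `G` at `r`: every edge joins a vertex to its parent. -/
structure IsParentMap (G : SimpleGraph V) (r : V) (p : V → V) : Prop where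
  map_root : p r = r
  eq_or_eq_of_adj : ∀ ⦃u v⦄, G.Adj u v → p v = u ∨ p u = v

/-- The parent of `v` is the second vertex of the unique path from `v` to `r`. -/
theorem IsTree.exists_isParentMap (hG : G.IsTree) (r : V) : ∃ p, G.IsParentMap r p := by
  classical
  choose P hP hP_unique using fun v => hG.existsUnique_path v r
  refine ⟨fun v => (P v).snd, ?_, fun u v h => ?_⟩
  · simp [← hP_unique r Walk.nil Walk.IsPath.nil]
  by_cases hv : v ∈ (P u).support
  · have : (P u).takeUntil v hv = Walk.cons h Walk.nil :=
      (hG.existsUnique_path u v).unique ((hP u).takeUntil hv) (by simp [h.ne])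
    right
    show (P u).snd = v
    conv_lhs => rw [← (P u).take_spec hv, this]
    simp
  · left
    show (P v).snd = u
    rw [← hP_unique v (Walk.cons h.symm (P u)) ((hP u).cons hv)]
    simp

namespace IsParentMap

variable {r : V} {p : V → V}

lemma eq_root_of_adj_root (hp : G.IsParentMap r p) {x : V} (h : G.Adj r x) : p x = r :=
  (hp.eq_or_eq_of_adj h).resolve_right fun h' => h.ne (hp.map_root.symm.trans h')

lemma eq_or_eq_of_adj_of_adj (hp : G.IsParentMap r p) {a x y : V} (hx : G.Adj a x)
    (hy : G.Adj a y) (hxy : x ≠ y) : p x = a ∨ p y = a := by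
  rcases hp.eq_or_eq_of_adj hx with hpx | hpa
  · exact Or.inl hpx
  · exact (hp.eq_or_eq_of_adj hy).elim Or.inr fun hpa' => absurd (hpa.symm.trans hpa') hxy

theorem card_filter_le_of_isDomSet [DecidableEq V] (hp : G.IsParentMap r p) {S D : Finset V}
    (hS : ∀ u ∈ S, ∃ x ∈ S, G.Adj u x) (hD : G.IsDomSet D) :
    (S.filter (p · ∉ S)).card ≤ D.card := by
  -- The vertex `z` charged to `u` is `u`, a child of `u` in `S`, or a grandchild of `u` through
  -- a child in `S`; in each case `u` is the first vertex on the way up from `z` whose parent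
  -- lies outside `S`.
  let owner : V → V := fun z => if p z ∉ S then z else if p (p z) ∉ S then p z else p (p z)
  have charge : ∀ u ∈ S.filter (p · ∉ S), ∃ z ∈ D, owner z = u := by
    intro u hu
    obtain ⟨hu, hpu⟩ := mem_filter.1 hu
    obtain ⟨x, hx, hux⟩ := hS u hu
    have hpx : p x = u := (hp.eq_or_eq_of_adj hux).resolve_right fun hpux => hpu (hpux ▸ hx)
    by_cases huD : u ∈ D
    · exact ⟨u, huD, by simp [owner, hpu]⟩
    by_cases hxD : x ∈ D
    · exact ⟨x, hxD, by simp [owner, hpx, hu, hpu]⟩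
    obtain ⟨y, hyD, hyx⟩ := (hD x).resolve_left hxD
    have hpy : p y = x :=
      (hp.eq_or_eq_of_adj hyx).resolve_left fun hpxy => huD (hpx ▸ hpxy ▸ hyD)
    exact ⟨y, hyD, by simp [owner, hpy, hpx, hx, hu]⟩
  choose! f hfD hf using charge
  exact card_le_card_of_injOn f hfD fun u hu v hv huv => by rw [← hf u hu, ← hf v hv, huv]

end IsParentMap

lemma IsDomSet.nonempty [Nonempty V] {D : Finset V} (hD : G.IsDomSet D) : D.Nonempty := by
  obtain ⟨v⟩ := ‹Nonempty V›
  rcases hD v with hv | ⟨u, hu, -⟩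
  exacts [⟨v, hv⟩, ⟨u, hu⟩]

variable (G) in
lemma exists_isDomSet_card_eq_domNumber [Fintype V] :
    ∃ D, G.IsDomSet D ∧ D.card = G.domNumber :=
  Nat.sInf_mem (s := {k | ∃ D, G.IsDomSet D ∧ D.card = k})
    ⟨_, univ, fun v => Or.inl (mem_univ v), rfl⟩

variable [Fintype V] [DecidableEq V]

lemma mem_closedNbhdFinset {v x : V} : x ∈ G.closedNbhdFinset v ↔ x = v ∨ G.Adj v x := by
  simp [closedNbhdFinset]

def IsDoubleDomSet (G : SimpleGraph V) (S : Finset V) : Prop :=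
  ∀ v, 2 ≤ (G.closedNbhdFinset v ∩ S).card

namespace IsDoubleDomSet

variable {S : Finset V}

lemma exists_two_mem (hS : G.IsDoubleDomSet S) (v : V) :
    ∃ x ∈ S, ∃ y ∈ S, x ≠ y ∧ (x = v ∨ G.Adj v x) ∧ (y = v ∨ G.Adj v y) := by
  obtain ⟨x, hx, y, hy, hxy⟩ := one_lt_card.1 (hS v)
  simp only [mem_inter, mem_closedNbhdFinset] at hx hy
  exact ⟨x, hx.2, y, hy.2, hxy, hx.1, hy.1⟩

lemma exists_adj_mem (hS : G.IsDoubleDomSet S) (v : V) : ∃ x ∈ S, G.Adj v x := by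
  obtain ⟨x, hx, y, hy, hxy, hvx | hvx, hvy | hvy⟩ := hS.exists_two_mem v
  · exact absurd (hvx.trans hvy.symm) hxy
  all_goals first | exact ⟨x, hx, hvx⟩ | exact ⟨y, hy, hvy⟩

lemma exists_two_adj_mem_of_notMem (hS : G.IsDoubleDomSet S) {v : V} (hv : v ∉ S) :
    ∃ x ∈ S, ∃ y ∈ S, x ≠ y ∧ G.Adj v x ∧ G.Adj v y := by
  obtain ⟨x, hx, y, hy, hxy, hvx, hvy⟩ := hS.exists_two_mem v
  have hne : ∀ z ∈ S, z ≠ v := fun z hz hzv => hv (hzv ▸ hz)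
  exact ⟨x, hx, y, hy, hxy, hvx.resolve_left (hne x hx), hvy.resolve_left (hne y hy)⟩

end IsDoubleDomSet

theorem IsParentMap.card_compl_lt_card_filter {r : V} {p : V → V} {S : Finset V}
    (hp : G.IsParentMap r p) (hS : G.IsDoubleDomSet S) (hr : r ∉ S) :
    Sᶜ.card < (S.filter (p · ∉ S)).card := by
  have child : ∀ a ∉ S, ∃ x ∈ S, p x = a := fun a ha => by
    obtain ⟨x, hx, y, hy, hxy, hax, hay⟩ := hS.exists_two_adj_mem_of_notMem ha
    rcases hp.eq_or_eq_of_adj_of_adj hax hay hxy with hpx | hpy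
    exacts [⟨x, hx, hpx⟩, ⟨y, hy, hpy⟩]
  choose! c hcS hpc using child
  obtain ⟨z, hzS, hpz, hzc⟩ : ∃ z ∈ S, p z = r ∧ z ≠ c r := by
    obtain ⟨x, hx, y, hy, hxy, hrx, hry⟩ := hS.exists_two_adj_mem_of_notMem hr
    by_cases hxc : x = c r
    · exact ⟨y, hy, hp.eq_root_of_adj_root hry, fun hyc => hxy (hxc.trans hyc.symm)⟩
    · exact ⟨x, hx, hp.eq_root_of_adj_root hrx, hxc⟩
  have hc_inj : Set.InjOn c ↑Sᶜ := fun a ha b hb hab => by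
    rw [coe_compl, Set.mem_compl_iff, mem_coe] at ha hb
    rw [← hpc a ha, ← hpc b hb, hab]
  have hz_notMem : z ∉ Sᶜ.image c := by
    rw [mem_image]
    rintro ⟨a, ha, rfl⟩
    exact hzc (congrArg c ((hpc a (mem_compl.1 ha)).symm.trans hpz))
  have hsub : insert z (Sᶜ.image c) ⊆ S.filter (p · ∉ S) := by
    refine insert_subset (mem_filter.2 ⟨hzS, hpz ▸ hr⟩) (image_subset_iff.2 fun a ha => ?_)
    rw [mem_compl] at ha
    exact mem_filter.2 ⟨hcS a ha, (hpc a ha).symm ▸ ha⟩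
  calc Sᶜ.card < (insert z (Sᶜ.image c)).card := by
        rw [card_insert_of_notMem hz_notMem, card_image_of_injOn hc_inj]
        exact Nat.lt_succ_self _
    _ ≤ _ := card_le_card hsub

lemma isDoubleDomSet_univ (h : ∀ v, ∃ w, G.Adj v w) : G.IsDoubleDomSet univ := fun v => by
  obtain ⟨w, hw⟩ := h v
  rw [inter_univ]
  exact one_lt_card.2 ⟨v, mem_closedNbhdFinset.2 (Or.inl rfl), w,
    mem_closedNbhdFinset.2 (Or.inr hw), hw.ne⟩

lemma exists_isDoubleDomSet_card_eq_doubleDomNumber (h : ∀ v, ∃ w, G.Adj v w) :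
    ∃ S, G.IsDoubleDomSet S ∧ S.card = G.doubleDomNumber :=
  Nat.sInf_mem (s := {k | ∃ S, G.IsDoubleDomSet S ∧ S.card = k})
    ⟨_, univ, isDoubleDomSet_univ h, rfl⟩

end SimpleGraph

open SimpleGraph

/-- For every tree `T` on `n ≥ 2` vertices, `γ_{×2}(T) + γ(T) ≥ n + 1`. -/
theorem doubleDom_add_dom_ge {V : Type*} [Fintype V] [DecidableEq V]
    (T : SimpleGraph V) (hT : T.IsTree) (n : ℕ) (hn : n = Fintype.card V)
    (h2 : 2 ≤ n) :
    n + 1 ≤ T.doubleDomNumber + T.domNumber := by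
  have : Nontrivial V := Fintype.one_lt_card_iff_nontrivial.1 (by omega)
  obtain ⟨S, hS, hSc⟩ := exists_isDoubleDomSet_card_eq_doubleDomNumber
    hT.connected.preconnected.exists_adj_of_nontrivial
  obtain ⟨D, hD, hDc⟩ := T.exists_isDomSet_card_eq_domNumber
  rw [← hSc, ← hDc, hn]
  by_cases hSu : S = univ
  · rw [hSu, card_univ, Nat.add_le_add_iff_left]
    exact hD.nonempty.card_pos
  obtain ⟨r, hr⟩ : ∃ r, r ∉ S := by simpa [eq_univ_iff_forall] using hSu
  obtain ⟨p, hp⟩ := hT.exists_isParentMap r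
  calc Fintype.card V + 1 = S.card + Sᶜ.card + 1 := by rw [card_add_card_compl]
    _ ≤ S.card + (S.filter (p · ∉ S)).card := by
        have := hp.card_compl_lt_card_filter hS hr
        omega
    _ ≤ S.card + D.card := by
        have := hp.card_filter_le_of_isDomSet (fun u _ => hS.exists_adj_mem u) hD
        omega
end

section
/- Let k ≥ 1 and suppose that for each natural number n a function f_n : ℝ → ℝ is given by f_n(x) = α₁(x)·(λ₁(x))^n + α₂(x)·(λ₂(x))^n + ⋯ + α_k(x)·(λ_k(x))^n, where the α_i and λ_i are functions ℝ → ℝ that are differentiable at 1, with α₁(1) ≠ 0, λ₁(1) ≠ 0, and |λ₁(1)| > |λ_i(1)| for all i > 1. Then the sequence f_n'(1)/(n·f_n(1)) converges to λ₁'(1)/λ₁(1) as n → ∞ (in particular f_n(1) ≠ 0 for all sufficiently large n). -/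
/-!
Divide everything by `λ₁(1)ⁿ`. Every term of `f_n(1) / λ₁(1)ⁿ = Σ αᵢ(1) (λᵢ(1)/λ₁(1))ⁿ` other
than the first is a geometric sequence with ratio of modulus `< 1`, so the sum tends to `α₁(1)`.
The derivative `f_n'(1) = Σ αᵢ'(1) λᵢ(1)ⁿ + n Σ αᵢ(1) λᵢ'(1) λᵢ(1)ⁿ⁻¹` is handled the same way:
after division by `n λ₁(1)ⁿ` the first sum carries a factor `1/n` and the second tends to
`α₁(1) λ₁'(1) / λ₁(1)`. The quotient of the two limits is `λ₁'(1)/λ₁(1)`.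
-/

open Filter Topology

theorem tendsto_sum_mul_pow_div_pow_of_dominant {ι : Type*} [Fintype ι] (c r : ι → ℝ) (i₀ : ι)
    (hr₀ : r i₀ ≠ 0) (hdom : ∀ i, i ≠ i₀ → |r i| < |r i₀|) :
    Tendsto (fun n : ℕ => (∑ i, c i * r i ^ n) / r i₀ ^ n) atTop (𝓝 (c i₀)) := by
  classical
  have hterm : ∀ i, Tendsto (fun n : ℕ => c i * (r i / r i₀) ^ n) atTop
      (𝓝 (if i = i₀ then c i₀ else 0)) := by
    intro i
    split_ifs with h
    · subst h
      simp [div_self hr₀]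
    · have hratio : |r i / r i₀| < 1 := by
        rw [abs_div, div_lt_one (abs_pos.mpr hr₀)]
        exact hdom i h
      simpa using (tendsto_pow_atTop_nhds_zero_of_abs_lt_one hratio).const_mul (c i)
  have hsum := tendsto_finsetSum Finset.univ fun i _ => hterm i
  rw [Finset.sum_ite_eq' Finset.univ i₀, if_pos (Finset.mem_univ _)] at hsum
  refine hsum.congr fun n => ?_
  simp only [Finset.sum_div, div_pow, mul_div_assoc]

theorem hasDerivAt_sum_mul_pow {ι : Type*} (s : Finset ι) {α lam : ι → ℝ → ℝ} {x : ℝ}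
    (hα : ∀ i ∈ s, DifferentiableAt ℝ (α i) x) (hlam : ∀ i ∈ s, DifferentiableAt ℝ (lam i) x)
    (n : ℕ) :
    HasDerivAt (fun y => ∑ i ∈ s, α i y * lam i y ^ n)
      (∑ i ∈ s, deriv (α i) x * lam i x ^ n
        + n * ∑ i ∈ s, α i x * deriv (lam i) x * lam i x ^ (n - 1)) x := by
  refine (HasDerivAt.fun_sum fun i hi =>
    (hα i hi).hasDerivAt.mul ((hlam i hi).hasDerivAt.pow n)).congr_deriv ?_
  rw [Finset.mul_sum, ← Finset.sum_add_distrib]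
  exact Finset.sum_congr rfl fun i _ => by rw [Pi.pow_apply]; ring

/-- Suppose `f_n(x) = Σ_i α_i(x)·(λ_i(x))^n` where the `α_i`, `λ_i` are differentiable
at `1`, `α₁(1) ≠ 0`, `λ₁(1) ≠ 0`, and `|λ₁(1)| > |λ_i(1)|` for all `i > 1`. Then
`f_n'(1)/(n·f_n(1)) → λ₁'(1)/λ₁(1)` as `n → ∞`. -/
theorem tendsto_deriv_div_of_dominant {k : ℕ} (hk : 1 ≤ k)
    (α lam : Fin k → ℝ → ℝ) (f : ℕ → ℝ → ℝ)
    (hα : ∀ i, DifferentiableAt ℝ (α i) 1)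
    (hlam : ∀ i, DifferentiableAt ℝ (lam i) 1)
    (hf : ∀ n x, f n x = ∑ i : Fin k, α i x * (lam i x) ^ n)
    (hα0 : α ⟨0, hk⟩ 1 ≠ 0) (hlam0 : lam ⟨0, hk⟩ 1 ≠ 0)
    (hdom : ∀ i : Fin k, i ≠ ⟨0, hk⟩ → |lam i 1| < |lam ⟨0, hk⟩ 1|) :
    Tendsto (fun n : ℕ => deriv (f n) 1 / (n * f n 1)) atTop
      (nhds (deriv (lam ⟨0, hk⟩) 1 / lam ⟨0, hk⟩ 1)) := by
  set i₀ : Fin k := ⟨0, hk⟩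
  set r₀ := lam i₀ 1
  have hdominant (c : Fin k → ℝ) :
      Tendsto (fun n : ℕ => (∑ i, c i * lam i 1 ^ n) / r₀ ^ n) atTop (𝓝 (c i₀)) :=
    tendsto_sum_mul_pow_div_pow_of_dominant c (fun i => lam i 1) i₀ hlam0 hdom
  have hvalue : Tendsto (fun n : ℕ => f n 1 / r₀ ^ n) atTop (𝓝 (α i₀ 1)) := by
    simpa only [hf] using hdominant fun i => α i 1
  have hderiv : Tendsto (fun n : ℕ => deriv (f n) 1 / (n * r₀ ^ n)) atTop
      (𝓝 (0 * deriv (α i₀) 1 + α i₀ 1 * deriv (lam i₀) 1 / r₀)) := by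
    -- for `n = m + 1` the quotient is `(1/n) · (Σ αᵢ' λᵢⁿ) / r₀ⁿ + ((Σ αᵢ λᵢ' λᵢᵐ) / r₀ᵐ) / r₀`
    refine ((tendsto_one_div_atTop_nhds_zero_nat.mul (hdominant fun i => deriv (α i) 1)).add
      (((hdominant fun i => α i 1 * deriv (lam i) 1).comp (tendsto_sub_atTop_nat 1)).div_const
        r₀)).congr' ?_
    filter_upwards [eventually_ge_atTop 1] with n hn
    obtain ⟨m, rfl⟩ := Nat.exists_eq_add_of_le' hn
    rw [funext (hf (m + 1)), (hasDerivAt_sum_mul_pow Finset.univ (fun i _ => hα i)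
      (fun i _ => hlam i) (m + 1)).deriv]
    simp only [Function.comp_apply, Nat.add_sub_cancel]
    field_simp
    push_cast
    ring
  convert (hderiv.div hvalue hα0).congr fun n => ?_ using 2
  · rw [zero_mul, zero_add, mul_div_assoc, mul_div_cancel_left₀ _ hα0]
  · rw [Pi.div_apply, div_mul_eq_div_div, div_div_div_cancel_right₀ (pow_ne_zero n hlam0),
      div_div]
end

section
/- The set of normalized averages {avd(G)/n : G a finite simple graph on n ≥ 1 vertices} is dense in the interval [1/2, 1]; that is, for every x ∈ [1/2, 1] and every ε > 0 there exists a finite simple graph G on some number n of vertices with |avd(G)/n − x| < ε. -/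
open Finset

/-! The graph made of a clique on `a` vertices and `n - a` isolated vertices has as dominating
sets exactly the unions of a nonempty subset of the clique with all isolated vertices, so
its `avd` is `n - a/2 + a / (2 (2^a - 1))`, within `1/2` of `n - a/2`. Since `x ≥ 1/2`, one
can pick `1 ≤ a ≤ n` with `a/2` within `1/2` of `n (1 - x)`, which puts `avd/n` within
`1/(2n)` of `x`. -/

lemma Finset.sum_card_powerset {α : Type*} (s : Finset α) :
    ∑ t ∈ s.powerset, #t = #s * 2 ^ (#s - 1) := by
  rw [← Nat.sum_range_mul_choose, sum_powerset_apply_card (fun m => m)]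
  simp only [smul_eq_mul, mul_comm]

lemma Finset.injOn_union_compl {α : Type*} [Fintype α] [DecidableEq α] {K : Finset α} :
    Set.InjOn (· ∪ Kᶜ) {s | s ⊆ K} := by
  intro s hs t ht hst
  rw [← union_sdiff_cancel_right (disjoint_compl_right.mono_left hs),
    ← union_sdiff_cancel_right (disjoint_compl_right.mono_left ht)]
  exact congrArg (· \ Kᶜ) hst

namespace SimpleGraph

variable {V : Type*}

def cliqueOn (K : Finset V) : SimpleGraph V := fromEdgeSet (K : Set V).sym2

@[simp]
lemma cliqueOn_adj {K : Finset V} {u v : V} :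
    (cliqueOn K).Adj u v ↔ u ∈ K ∧ v ∈ K ∧ u ≠ v := by
  simp [cliqueOn, and_assoc]

variable [Fintype V] [DecidableEq V] {K : Finset V}

lemma isDomSet_cliqueOn_iff (hK : K.Nonempty) {S : Finset V} :
    (cliqueOn K).IsDomSet S ↔ (S ∩ K).Nonempty ∧ Kᶜ ⊆ S := by
  constructor
  · intro hS
    refine ⟨?_, fun v hv => ?_⟩
    · obtain ⟨v, hv⟩ := hK
      rcases hS v with hvS | ⟨u, huS, huv⟩
      · exact ⟨v, mem_inter.2 ⟨hvS, hv⟩⟩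
      · exact ⟨u, mem_inter.2 ⟨huS, (cliqueOn_adj.1 huv).1⟩⟩
    · rcases hS v with hvS | ⟨u, -, huv⟩
      · exact hvS
      · exact absurd (cliqueOn_adj.1 huv).2.1 (mem_compl.1 hv)
  · rintro ⟨⟨u, hu⟩, hKS⟩ v
    rw [mem_inter] at hu
    by_cases hvK : v ∈ K
    · by_cases huv : u = v
      · exact Or.inl (huv ▸ hu.1)
      · exact Or.inr ⟨u, hu.1, cliqueOn_adj.2 ⟨hu.2, hvK, huv⟩⟩
    · exact Or.inl (hKS (mem_compl.2 hvK))

lemma domSets_cliqueOn (hK : K.Nonempty) :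
    (cliqueOn K).domSets = (K.powerset.erase ∅).image (· ∪ Kᶜ) := by
  ext S
  simp only [domSets, mem_filter, mem_univ, true_and, isDomSet_cliqueOn_iff hK, mem_image,
    mem_erase, mem_powerset, ← nonempty_iff_ne_empty]
  constructor
  · rintro ⟨hne, hKS⟩
    refine ⟨S ∩ K, ⟨hne, inter_subset_right⟩, ?_⟩
    ext v
    grind [mem_compl]
  · rintro ⟨s, ⟨hne, hsK⟩, rfl⟩
    exact ⟨hne.mono (subset_inter subset_union_left hsK), subset_union_right⟩

lemma card_domSets_cliqueOn (hK : K.Nonempty) : #(cliqueOn K).domSets = 2 ^ #K - 1 := by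
  have hinj : Set.InjOn (· ∪ Kᶜ) (K.powerset.erase ∅ : Set (Finset V)) :=
    injOn_union_compl.mono fun s hs => mem_powerset.1 (mem_of_mem_erase hs)
  rw [domSets_cliqueOn hK, card_image_of_injOn hinj, card_erase_of_mem (empty_mem_powerset K),
    card_powerset]

lemma sum_card_domSets_cliqueOn (hK : K.Nonempty) :
    ∑ S ∈ (cliqueOn K).domSets, #S = #K * 2 ^ (#K - 1) + (2 ^ #K - 1) * #Kᶜ := by
  have hcard : ∀ s ∈ K.powerset.erase ∅, #(s ∪ Kᶜ) = #s + #Kᶜ := fun s hs =>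
    card_union_of_disjoint (disjoint_compl_right.mono_left (mem_powerset.1 (mem_of_mem_erase hs)))
  have hinj : Set.InjOn (· ∪ Kᶜ) (K.powerset.erase ∅ : Set (Finset V)) :=
    injOn_union_compl.mono fun s hs => mem_powerset.1 (mem_of_mem_erase hs)
  rw [domSets_cliqueOn hK, sum_image hinj, sum_congr rfl hcard, sum_add_distrib,
    sum_erase _ card_empty, sum_card_powerset, sum_const,
    card_erase_of_mem (empty_mem_powerset K), card_powerset, smul_eq_mul]

lemma avd_cliqueOn (hK : K.Nonempty) :
    (cliqueOn K).avd = Fintype.card V - #K / 2 + #K / (2 * (2 ^ #K - 1)) := by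
  obtain ⟨b, hb⟩ : ∃ b, #K = b + 1 := Nat.exists_eq_add_one.2 hK.card_pos
  have hpow : (1 : ℝ) < 2 ^ (b + 1) := one_lt_pow₀ one_lt_two b.succ_ne_zero
  rw [avd, ← Nat.cast_sum, sum_card_domSets_cliqueOn hK, card_domSets_cliqueOn hK, card_compl, hb]
  push_cast [Nat.one_le_two_pow, Nat.cast_sub (hb ▸ card_le_univ K : b + 1 ≤ Fintype.card V)]
  field_simp [(sub_pos.2 hpow).ne']
  ring

lemma avd_cliqueOn_sub_mem_Icc (hK : K.Nonempty) :
    (cliqueOn K).avd - (Fintype.card V - #K / 2) ∈ Set.Icc (0 : ℝ) (1 / 2) := by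
  have hsucc : (#K : ℝ) + 1 ≤ 2 ^ #K := by exact_mod_cast Nat.lt_two_pow_self
  have hden : (#K : ℝ) ≤ 2 ^ #K - 1 := by linarith
  have hK0 : (0 : ℝ) ≤ #K := Nat.cast_nonneg _
  rw [avd_cliqueOn hK, add_sub_cancel_left, mul_comm, ← div_div]
  exact ⟨div_nonneg (div_nonneg hK0 (hK0.trans hden)) zero_le_two,
    div_le_div_of_nonneg_right (div_le_one_of_le₀ hden (hK0.trans hden)) zero_le_two⟩

end SimpleGraph

lemma exists_nat_mem_Icc_of_mem_Icc {t : ℝ} {n : ℕ} (hn : 1 ≤ n)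
    (ht : t ∈ Set.Icc 0 (n : ℝ)) :
    ∃ a : ℕ, 1 ≤ a ∧ a ≤ n ∧ (a : ℝ) ∈ Set.Icc t (t + 1) := by
  refine ⟨max 1 ⌈t⌉₊, le_max_left _ _, max_le hn (Nat.ceil_le.2 ht.2), ?_, ?_⟩
  · exact (Nat.le_ceil t).trans (by exact_mod_cast le_max_right _ _)
  · rw [Nat.cast_max, Nat.cast_one]
    exact max_le (by linarith [ht.1]) (Nat.ceil_lt_add_one ht.1).le

lemma exists_avd_sub_mul_le {x : ℝ} (hx : x ∈ Set.Icc (1 / 2 : ℝ) 1) {n : ℕ}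
    (hn : 1 ≤ n) :
    ∃ G : SimpleGraph (Fin n), |G.avd - x * n| ≤ 1 / 2 := by
  obtain ⟨a, ha1, han, hat⟩ := exists_nat_mem_Icc_of_mem_Icc (t := 2 * n * (1 - x)) hn
    ⟨by nlinarith [hx.2, (Nat.cast_nonneg n : (0 : ℝ) ≤ n)],
     by nlinarith [hx.1, (Nat.cast_nonneg n : (0 : ℝ) ≤ n)]⟩
  obtain ⟨K, -, hK⟩ := exists_subset_card_eq (s := (univ : Finset (Fin n))) (by simpa using han)
  have hG := SimpleGraph.avd_cliqueOn_sub_mem_Icc (card_pos.1 (hK ▸ ha1))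
  rw [hK, Fintype.card_fin] at hG
  refine ⟨SimpleGraph.cliqueOn K, abs_le.2 ⟨?_, ?_⟩⟩ <;> linarith [hG.1, hG.2, hat.1, hat.2]

/-- The set of normalized averages `avd(G)/n` over finite simple graphs `G` on
`n ≥ 1` vertices is dense in `[1/2, 1]`. -/
theorem normalized_avd_dense :
    ∀ x ∈ Set.Icc ((1 : ℝ) / 2) 1, ∀ ε > (0 : ℝ),
      ∃ (n : ℕ) (_ : 1 ≤ n) (G : SimpleGraph (Fin n)),
        |G.avd / (n : ℝ) - x| < ε := by
  intro x hx ε hε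
  obtain ⟨n, hn⟩ := exists_nat_gt (1 / ε)
  have hn0 : (0 : ℝ) < n := (one_div_pos.2 hε).trans hn
  have hn1 : 1 ≤ n := Nat.cast_pos.1 hn0
  obtain ⟨G, hG⟩ := exists_avd_sub_mul_le hx hn1
  refine ⟨n, hn1, G, ?_⟩
  calc |G.avd / n - x| = |(G.avd - x * n) / n| := by
        rw [sub_div, mul_div_cancel_right₀ _ hn0.ne']
    _ = |G.avd - x * n| / n := by rw [abs_div, abs_of_pos hn0]
    _ ≤ 1 / 2 / n := by gcongr
    _ < 1 / n := by gcongr; norm_num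
    _ < ε := (one_div_lt hε hn0).1 hn
end

section
/- Let G be a finite simple graph with n vertices and matching number ν(G). Then avd(G) ≤ n − 2ν(G)/3. -/
open Finset

/-- The matching number of `G`: the largest cardinality of a set of pairwise
disjoint edges of `G`. -/
noncomputable def SimpleGraph.matchingNumber' {V : Type*} [Fintype V]
    (G : SimpleGraph V) : ℕ :=
  sSup {k | ∃ M : Finset (Sym2 V), (↑M : Set (Sym2 V)) ⊆ G.edgeSet ∧
    ((↑M : Set (Sym2 V)).Pairwise fun e f => ∀ v : V, ¬(v ∈ e ∧ v ∈ f)) ∧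
    M.card = k}

lemma mem_domSets {V : Type*} [Fintype V] (G : SimpleGraph V) (S : Finset V) :
    S ∈ G.domSets ↔ G.IsDomSet S := by
  simp [SimpleGraph.domSets]

-- private vertex existence
lemma priv_exists {V : Type*} [Fintype V] [DecidableEq V] (G : SimpleGraph V) (S : Finset V) (x y : V)
    (hS : G.IsDomSet S) (hx : x ∈ S) (hy : y ∈ S) (hxy : G.Adj x y)
    (hne : ¬ G.IsDomSet (S.erase x)) :
    ∃ p, p ∉ S ∧ G.Adj x p ∧ ∀ z ∈ S, z ≠ x → ¬G.Adj z p := by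
  rw [SimpleGraph.IsDomSet] at hne
  push_neg at hne
  obtain ⟨p, hp1, hp2⟩ := hne
  have hpx : p ≠ x := by
    rintro rfl
    exact hp2 y (Finset.mem_erase.mpr ⟨(G.ne_of_adj hxy).symm, hy⟩) hxy.symm
  have hpS : p ∉ S := fun h => hp1 (Finset.mem_erase.mpr ⟨hpx, h⟩)
  have hdom := hS p
  rcases hdom with h | ⟨u, huS, hu⟩
  · exact absurd h hpS
  · have hux : u = x := by
      by_contra hux
      exact hp2 u (Finset.mem_erase.mpr ⟨hux, huS⟩) hu
    subst hux
    exact ⟨p, hpS, hu, fun z hz hzx hadj => hp2 z (Finset.mem_erase.mpr ⟨hzx, hz⟩) hadj⟩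

lemma key_count_s19 {V : Type*} [Fintype V] [DecidableEq V] (G : SimpleGraph V) (k : ℕ)
    (ep : Fin k × Fin 2 → V) (hinj : Function.Injective ep)
    (hadj : ∀ i : Fin k, G.Adj (ep (i, 0)) (ep (i, 1))) :
    G.domSets.card * (k * 2) ≤ (∑ T ∈ G.domSets, (Fintype.card V - T.card)) * 3 := by
  classical
  set D := G.domSets with hDdef
  set os : Fin 2 → Fin 2 := fun σ => if σ = 0 then 1 else 0 with hosdef
  have hos : ∀ σ, os (os σ) = σ := by decide
  have hosinj : Function.Injective os := by decide
  have hadj' : ∀ (w : Fin k × Fin 2), G.Adj (ep w) (ep (w.1, os w.2)) := by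
    rintro ⟨i, σ⟩
    fin_cases σ
    · simpa [os] using hadj i
    · simpa [os] using (hadj i).symm
  set priv : Finset V → V → V := fun S x =>
    if h : ∃ p, p ∉ S ∧ G.Adj x p ∧ ∀ z ∈ S, z ≠ x → ¬G.Adj z p then h.choose else x
    with hprivdef
  have hprivspec : ∀ (S : Finset V) (x : V)
      (h : ∃ p, p ∉ S ∧ G.Adj x p ∧ ∀ z ∈ S, z ≠ x → ¬G.Adj z p),
      priv S x ∉ S ∧ G.Adj x (priv S x) ∧ ∀ z ∈ S, z ≠ x → ¬G.Adj z (priv S x) := by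
    intro S x h
    simp only [hprivdef, dif_pos h]
    exact h.choose_spec
  set f : Finset V × (Fin k × Fin 2) → Finset V × V × Fin 3 := fun q =>
    if ep q.2 ∈ q.1 then
      (if ep (q.2.1, os q.2.2) ∈ q.1 then
        (if q.1.erase (ep q.2) ∈ D then (q.1.erase (ep q.2), ep q.2, (2 : Fin 3))
         else (q.1, priv q.1 (ep q.2), (2 : Fin 3)))
       else (q.1, ep (q.2.1, os q.2.2), (1 : Fin 3)))
    else (q.1, ep q.2, (0 : Fin 3)) with hfdef
  have hchar : ∀ (S : Finset V) (w : Fin k × Fin 2),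
      (ep w ∉ S ∧ f (S, w) = (S, ep w, 0))
    ∨ (ep w ∈ S ∧ ep (w.1, os w.2) ∉ S ∧ f (S, w) = (S, ep (w.1, os w.2), 1))
    ∨ (ep w ∈ S ∧ ep (w.1, os w.2) ∈ S ∧ S.erase (ep w) ∈ D ∧
        f (S, w) = (S.erase (ep w), ep w, 2))
    ∨ (ep w ∈ S ∧ ep (w.1, os w.2) ∈ S ∧ S.erase (ep w) ∉ D ∧
        f (S, w) = (S, priv S (ep w), 2)) := by
    intro S w
    by_cases hx : ep w ∈ S
    · by_cases hy : ep (w.1, os w.2) ∈ S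
      · by_cases he : S.erase (ep w) ∈ D
        · exact Or.inr (Or.inr (Or.inl ⟨hx, hy, he, by simp [hfdef, hx, hy, he]⟩))
        · exact Or.inr (Or.inr (Or.inr ⟨hx, hy, he, by simp [hfdef, hx, hy, he]⟩))
      · exact Or.inr (Or.inl ⟨hx, hy, by simp [hfdef, hx, hy]⟩)
    · exact Or.inl ⟨hx, by simp [hfdef, hx]⟩
  set A : Finset (Finset V × (Fin k × Fin 2)) := D ×ˢ (univ : Finset (Fin k × Fin 2))
    with hAdef
  set B : Finset (Finset V × V × Fin 3) :=
    D.biUnion (fun T => ({T} : Finset (Finset V)) ×ˢ ((univ \ T) ×ˢ (univ : Finset (Fin 3))))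
    with hBdef
  have hmemB : ∀ (T : Finset V) (v : V) (j : Fin 3), T ∈ D → v ∉ T → (T, v, j) ∈ B := by
    intro T v j hT hv
    rw [hBdef, Finset.mem_biUnion]
    exact ⟨T, hT, by simp [Finset.mem_product, hv]⟩
  have hmaps : ∀ q ∈ A, f q ∈ B := by
    rintro ⟨S, w⟩ hq
    have hSD : S ∈ D := (Finset.mem_product.mp hq).1
    rcases hchar S w with ⟨hx, hfe⟩ | ⟨hx, hy, hfe⟩ | ⟨hx, hy, he, hfe⟩ | ⟨hx, hy, he, hfe⟩
    · rw [hfe]; exact hmemB _ _ _ hSD hx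
    · rw [hfe]; exact hmemB _ _ _ hSD hy
    · rw [hfe]; exact hmemB _ _ _ he (Finset.notMem_erase _ _)
    · rw [hfe]
      have hex := priv_exists G S (ep w) (ep (w.1, os w.2)) ((mem_domSets G S).mp hSD)
        hx hy (hadj' w) (fun hc => he ((mem_domSets G _).mpr hc))
      exact hmemB _ _ _ hSD (hprivspec S (ep w) hex).1
  have hne_xy : ∀ (w : Fin k × Fin 2), ep w ≠ ep (w.1, os w.2) := fun w => (hadj' w).ne
  have hw_of_ow : ∀ (w w' : Fin k × Fin 2),
      (w.1, os w.2) = (w'.1, os w'.2) → w = w' := by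
    rintro ⟨i, σ⟩ ⟨i', σ'⟩ h
    rw [Prod.mk.injEq] at h
    exact Prod.ext h.1 (hosinj h.2)
  -- the key asymmetric impossibility: branch 2 (erase) vs branch 3 (priv)
  have himposs : ∀ (S S' : Finset V) (w w' : Fin k × Fin 2),
      S ∈ D → S' ∈ D →
      ep w ∈ S → ep (w.1, os w.2) ∈ S → S.erase (ep w) ∈ D →
      ep w' ∈ S' → ep (w'.1, os w'.2) ∈ S' → S'.erase (ep w') ∉ D →
      (S.erase (ep w), ep w, (2 : Fin 3)) = (S', priv S' (ep w'), 2) → False := by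
    intro S S' w w' hSD hS'D hx hy he hx' hy' he' heq
    rw [Prod.mk.injEq, Prod.mk.injEq] at heq
    obtain ⟨hSe, hpx, -⟩ := heq
    have hex' := priv_exists G S' (ep w') (ep (w'.1, os w'.2)) ((mem_domSets G S').mp hS'D)
      hx' hy' (hadj' w') (fun hc => he' ((mem_domSets G _).mpr hc))
    obtain ⟨hp1, hp2, hp3⟩ := hprivspec S' (ep w') hex'
    have hyS' : ep (w.1, os w.2) ∈ S' := by
      rw [← hSe]
      exact Finset.mem_erase.mpr ⟨(hne_xy w).symm, hy⟩
    have hadjyx : G.Adj (ep (w.1, os w.2)) (priv S' (ep w')) := by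
      rw [← hpx]; exact (hadj' w).symm
    have hyx' : ep (w.1, os w.2) = ep w' := by
      by_contra hc
      exact hp3 _ hyS' hc hadjyx
    have how : (w.1, os w.2) = w' := hinj hyx'
    have : ep (w'.1, os w'.2) = ep w := by
      rw [← how]
      simp only [hos]
    rw [this] at hy'
    rw [← hSe] at hy'
    exact Finset.notMem_erase _ _ hy'
  have hinjOn : Set.InjOn f ↑A := by
    rintro ⟨S, w⟩ hq ⟨S', w'⟩ hq' heq
    have hSD : S ∈ D := (Finset.mem_product.mp (Finset.mem_coe.mp hq)).1
    have hS'D : S' ∈ D := (Finset.mem_product.mp (Finset.mem_coe.mp hq')).1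
    rcases hchar S w with ⟨hx, hfe⟩ | ⟨hx, hy, hfe⟩ | ⟨hx, hy, he, hfe⟩ | ⟨hx, hy, he, hfe⟩ <;>
      rcases hchar S' w' with ⟨hx', hfe'⟩ | ⟨hx', hy', hfe'⟩ | ⟨hx', hy', he', hfe'⟩ |
        ⟨hx', hy', he', hfe'⟩ <;>
      rw [hfe, hfe'] at heq
    · -- (0,0)
      rw [Prod.mk.injEq, Prod.mk.injEq] at heq
      exact Prod.ext heq.1 (hinj heq.2.1)
    · simp only [Prod.mk.injEq] at heq
      exact absurd heq.2.2 (by decide)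
    · simp only [Prod.mk.injEq] at heq
      exact absurd heq.2.2 (by decide)
    · simp only [Prod.mk.injEq] at heq
      exact absurd heq.2.2 (by decide)
    · simp only [Prod.mk.injEq] at heq
      exact absurd heq.2.2 (by decide)
    · -- (1,1)
      rw [Prod.mk.injEq, Prod.mk.injEq] at heq
      exact Prod.ext heq.1 (hw_of_ow _ _ (hinj heq.2.1))
    · simp only [Prod.mk.injEq] at heq
      exact absurd heq.2.2 (by decide)
    · simp only [Prod.mk.injEq] at heq
      exact absurd heq.2.2 (by decide)
    · simp only [Prod.mk.injEq] at heq
      exact absurd heq.2.2 (by decide)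
    · simp only [Prod.mk.injEq] at heq
      exact absurd heq.2.2 (by decide)
    · -- (2,2) erase/erase
      rw [Prod.mk.injEq, Prod.mk.injEq] at heq
      obtain ⟨hSe, hxx, -⟩ := heq
      have hww : w = w' := hinj hxx
      have hSS : S = S' := by
        rw [← Finset.insert_erase hx, ← Finset.insert_erase hx', hSe, hxx]
      exact Prod.ext hSS hww
    · -- (2,3) erase/priv : impossible
      exact (himposs S S' w w' hSD hS'D hx hy he hx' hy' he' heq).elim
    · simp only [Prod.mk.injEq] at heq
      exact absurd heq.2.2 (by decide)
    · simp only [Prod.mk.injEq] at heq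
      exact absurd heq.2.2 (by decide)
    · -- (3,2) priv/erase : impossible
      exact (himposs S' S w' w hS'D hSD hx' hy' he' hx hy he heq.symm).elim
    · -- (3,3) priv/priv
      rw [Prod.mk.injEq, Prod.mk.injEq] at heq
      obtain ⟨hSS, hpp, -⟩ := heq
      subst hSS
      have hex := priv_exists G S (ep w) (ep (w.1, os w.2)) ((mem_domSets G S).mp hSD)
        hx hy (hadj' w) (fun hc => he ((mem_domSets G _).mpr hc))
      have hex' := priv_exists G S (ep w') (ep (w'.1, os w'.2)) ((mem_domSets G S).mp hSD)
        hx' hy' (hadj' w') (fun hc => he' ((mem_domSets G _).mpr hc))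
      obtain ⟨-, -, hp3⟩ := hprivspec S (ep w) hex
      obtain ⟨-, hp2', -⟩ := hprivspec S (ep w') hex'
      have hxx : ep w = ep w' := by
        by_contra hc
        have : G.Adj (ep w') (priv S (ep w)) := by rw [hpp]; exact hp2'
        exact hp3 _ hx' (fun hcc => hc hcc.symm) this
      exact Prod.ext rfl (hinj hxx)
  have hcard := Finset.card_le_card_of_injOn f hmaps hinjOn
  have hA : A.card = D.card * (k * 2) := by
    rw [hAdef, Finset.card_product, Finset.card_univ, Fintype.card_prod,
      Fintype.card_fin, Fintype.card_fin]
  have hB : B.card = (∑ T ∈ D, (Fintype.card V - T.card)) * 3 := by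
    rw [hBdef, Finset.card_biUnion, Finset.sum_mul]
    · refine Finset.sum_congr rfl fun T hT => ?_
      rw [Finset.card_product, Finset.card_product, Finset.card_singleton,
        Finset.card_univ, Fintype.card_fin, Finset.card_sdiff_of_subset (Finset.subset_univ T),
        Finset.card_univ, one_mul]
    · intro T hT T' hT' hne
      rw [Function.onFun, Finset.disjoint_left]
      rintro ⟨a, b⟩ ha ha'
      have h1 : a = T := Finset.mem_singleton.mp (Finset.mem_product.mp ha).1
      have h2 : a = T' := Finset.mem_singleton.mp (Finset.mem_product.mp ha').1
      exact hne (h1 ▸ h2)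
  rw [hA, hB] at hcard
  exact hcard

lemma exists_ep {V : Type*} [Fintype V] [DecidableEq V] (G : SimpleGraph V)
    (M : Finset (Sym2 V)) (hsub : (↑M : Set (Sym2 V)) ⊆ G.edgeSet)
    (hpw : (↑M : Set (Sym2 V)).Pairwise fun e f => ∀ v : V, ¬(v ∈ e ∧ v ∈ f)) :
    ∃ ep : Fin M.card × Fin 2 → V, Function.Injective ep ∧
      ∀ i, G.Adj (ep (i, 0)) (ep (i, 1)) := by
  classical
  set edge : Fin M.card → Sym2 V := fun i => (M.equivFin.symm i : Sym2 V) with hedge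
  have hedgemem : ∀ i, edge i ∈ M := fun i => (M.equivFin.symm i).2
  have hedgeinj : Function.Injective edge := fun i j h =>
    M.equivFin.symm.injective (Subtype.ext h)
  set ep : Fin M.card × Fin 2 → V := fun w =>
    if w.2 = 0 then (Quot.out (edge w.1)).1 else (Quot.out (edge w.1)).2 with hep
  have hout : ∀ i, Sym2.mk (Quot.out (edge i)).1 (Quot.out (edge i)).2 = edge i := fun i => Quot.out_eq _
  have hadj : ∀ i, G.Adj (ep (i, 0)) (ep (i, 1)) := by
    intro i
    have hmem : edge i ∈ G.edgeSet := hsub (hedgemem i)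
    rw [← hout i] at hmem
    have h2 : G.Adj (Quot.out (edge i)).1 (Quot.out (edge i)).2 := by
      rwa [← SimpleGraph.mem_edgeSet]
    simpa [hep] using h2
  have hmemv : ∀ (w : Fin M.card × Fin 2), ep w ∈ edge w.1 := by
    rintro ⟨i, σ⟩
    fin_cases σ
    · simpa [hep] using Sym2.out_fst_mem (edge i)
    · simpa [hep] using Sym2.out_snd_mem (edge i)
  refine ⟨ep, ?_, hadj⟩
  rintro ⟨i, σ⟩ ⟨i', σ'⟩ h
  have hii : i = i' := by
    by_contra hne
    have hedne : edge i ≠ edge i' := fun hc => hne (hedgeinj hc)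
    have hdisj := hpw (Finset.mem_coe.mpr (hedgemem i)) (Finset.mem_coe.mpr (hedgemem i'))
      hedne (ep (i, σ))
    exact hdisj ⟨hmemv (i, σ), h ▸ hmemv (i', σ')⟩
  subst hii
  have hσ : σ = σ' := by
    by_contra hne
    fin_cases σ <;> fin_cases σ' <;>
      first
        | exact hne rfl
        | exact absurd h (by simpa [hep] using (hadj i).ne)
        | exact absurd h.symm (by simpa [hep] using (hadj i).ne)
  exact Prod.ext rfl hσ

/-- For a graph `G` with `n` vertices and matching number `ν(G)`,
`avd(G) ≤ n − 2ν(G)/3`. -/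
theorem avd_le_of_matchingNumber {V : Type*} [Fintype V] (G : SimpleGraph V)
    (n : ℕ) (hn : n = Fintype.card V) :
    G.avd ≤ (n : ℝ) - 2 * (G.matchingNumber' : ℝ) / 3 := by
  classical
  subst hn
  set n := Fintype.card V with hndef
  have hK0 : (0 : ℕ) ∈ {k | ∃ M : Finset (Sym2 V), (↑M : Set (Sym2 V)) ⊆ G.edgeSet ∧
      ((↑M : Set (Sym2 V)).Pairwise fun e f => ∀ v : V, ¬(v ∈ e ∧ v ∈ f)) ∧
      M.card = k} := ⟨∅, by simp, by simp, by simp⟩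
  have hbdd : BddAbove {k | ∃ M : Finset (Sym2 V), (↑M : Set (Sym2 V)) ⊆ G.edgeSet ∧
      ((↑M : Set (Sym2 V)).Pairwise fun e f => ∀ v : V, ¬(v ∈ e ∧ v ∈ f)) ∧
      M.card = k} := by
    refine ⟨Fintype.card (Sym2 V), ?_⟩
    rintro k ⟨M, -, -, rfl⟩
    exact le_trans (Finset.card_le_univ M) (le_of_eq Finset.card_univ)
  have hmem : G.matchingNumber' ∈ {k | ∃ M : Finset (Sym2 V), (↑M : Set (Sym2 V)) ⊆ G.edgeSet ∧
      ((↑M : Set (Sym2 V)).Pairwise fun e f => ∀ v : V, ¬(v ∈ e ∧ v ∈ f)) ∧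
      M.card = k} := by
    rw [SimpleGraph.matchingNumber']
    exact Nat.sSup_mem ⟨0, hK0⟩ hbdd
  obtain ⟨M, hsub, hpw, hMcard⟩ := hmem
  obtain ⟨ep, hepinj, hepadj⟩ := exists_ep G M hsub hpw
  have hcount := key_count_s19 G M.card ep hepinj hepadj
  have huniv : (univ : Finset V) ∈ G.domSets := by
    rw [mem_domSets]
    intro v; left; exact mem_univ v
  have hpos : 0 < (G.domSets).card := Finset.card_pos.mpr ⟨univ, huniv⟩
  have hsplit : (∑ T ∈ G.domSets, (n - T.card)) + ∑ T ∈ G.domSets, T.card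
      = n * (G.domSets).card := by
    rw [← Finset.sum_add_distrib,
      Finset.sum_congr rfl fun T _ => Nat.sub_add_cancel (Finset.card_le_univ T),
      Finset.sum_const, smul_eq_mul, mul_comm]
  rw [SimpleGraph.avd, div_le_iff₀ (by exact_mod_cast hpos), ← hMcard]
  rw [← Nat.cast_sum]
  have h1 : (((G.domSets).card : ℝ) * ((M.card : ℝ) * 2))
      ≤ ((∑ T ∈ G.domSets, (n - T.card) : ℕ) : ℝ) * 3 := by exact_mod_cast hcount
  have h2 : ((∑ T ∈ G.domSets, (n - T.card) : ℕ) : ℝ)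
      + ((∑ T ∈ G.domSets, T.card : ℕ) : ℝ) = (n : ℝ) * ((G.domSets).card : ℝ) := by
    exact_mod_cast hsplit
  have hposR : (0 : ℝ) < ((G.domSets).card : ℝ) := by exact_mod_cast hpos
  linarith [h1, h2]
end
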